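/- arXiv:1604.05348 — 14 statements merged into one kernel-verified Lean document; each statement's English description precedes it below -/
import Mathlib

section
/- Let D be an integral domain. Then the polynomial ring D[X] is an IDF domain if and only if D is both an IDF domain and MCD-finite. -/
/-- An integral domain is an *IDF domain* if every nonzero element has only finitely
many irreducible divisors up to associates. -/
def IsIDFDomain (D : Type*) [CommMonoidWithZero D] : Prop :=
  ∀ a : D, a ≠ 0 → (Associates.mk '' {p : D | Irreducible p ∧ p ∣ a}).Finite

/-- `c` is a *maximal common divisor* (MCD) of the set `T`: it is a common divisor of
`T` and every common divisor of `T` divisible by `c` is an associate of `c`. -/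
def IsMCD {D : Type*} [CommMonoidWithZero D] (T : Set D) (c : D) : Prop :=
  (∀ t ∈ T, c ∣ t) ∧ ∀ d : D, (∀ t ∈ T, d ∣ t) → c ∣ d → Associated c d

/-- A domain is *MCD-finite* if every finite subset of its nonzero elements has only
finitely many maximal common divisors up to associates. -/
def MCDFinite (D : Type*) [CommMonoidWithZero D] : Prop :=
  ∀ T : Set D, T.Finite → (∀ t ∈ T, t ≠ 0) →
    (Associates.mk '' {c : D | IsMCD T c}).Finite

/-!
Forward direction: `C` matches the irreducible divisors of `a` with the constant irreducible
divisors of `C a`. For a finite set `T`, take `f` whose set of coefficients is `T`; then `c` is an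
MCD of `T` exactly when `f = C c * g` with `g` primitive, and `g` determines `c`. A primitive
divisor of `f` is a unit, an irreducible divisor of `f`, or a product of two primitive divisors of
smaller degree, so by induction on the degree there are finitely many up to associates.

Backward direction: constant irreducible divisors of `f` divide its leading coefficient. A
nonconstant irreducible divisor `p` of `f` is primitive, and over the fraction field `K` it is one
of the finitely many divisors of `f` up to associates. If `f = p * q = g * r` with `p` and `g`
associated over `K`, then `p * C q.leadingCoeff = g * C r.leadingCoeff`, both sides having the
same leading coefficient; so `q.leadingCoeff` is an MCD of the coefficients of the fixed
polynomial `g * C r.leadingCoeff`, and it determines `p` up to associates.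
-/

open Polynomial

theorem Associates.finite_image_mk_image {M N F : Type*} [Monoid M] [Monoid N] [FunLike F M N]
    [MonoidHomClass F M N] (f : F) {s : Set M} (hs : (Associates.mk '' s).Finite) :
    (Associates.mk '' (f '' s)).Finite := by
  refine (hs.image fun z => Associates.mk (f (Quot.out z))).subset ?_
  rintro _ ⟨_, ⟨a, ha, rfl⟩, rfl⟩
  exact ⟨Associates.mk a, ⟨a, ha, rfl⟩,
    Associates.mk_eq_mk_iff_associated.mpr ((Associates.mk_quot_out a).map f)⟩

theorem Associates.finite_image_mk_of_forall_exists_mul_eq {M : Type*}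
    [CommMonoidWithZero M] [IsCancelMulZero M] {a : M} (ha : a ≠ 0) {s t : Set M}
    (ht : (Associates.mk '' t).Finite) (hst : ∀ x ∈ s, ∃ y ∈ t, x * y = a) :
    (Associates.mk '' s).Finite := by
  have hsub : ∀ w ∈ Associates.mk '' t, {z | z * w = Associates.mk a}.Subsingleton := by
    intro w _ z hz z' hz'
    have hw : w ≠ 0 := by
      rintro rfl
      exact Associates.mk_ne_zero.mpr ha (by simpa using hz.symm)
    exact mul_right_cancel₀ hw (hz.trans hz'.symm)
  refine (ht.biUnion fun w hw => (hsub w hw).finite).subset ?_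
  rintro _ ⟨x, hx, rfl⟩
  obtain ⟨y, hy, rfl⟩ := hst x hx
  exact Set.mem_biUnion ⟨y, hy, rfl⟩ (Associates.mk_mul_mk (x := x) (y := y))

theorem UniqueFactorizationMonoid.finite_image_mk_dvd {α : Type*} [CommMonoidWithZero α]
    [UniqueFactorizationMonoid α] {y : α} (hy : y ≠ 0) :
    (Associates.mk '' {x | x ∣ y}).Finite := by
  classical
  let := UniqueFactorizationMonoid.strongNormalizationMonoid (α := α)
  refine ((normalizedFactors y).powerset.toFinset.finite_toSet.image
    fun s => Associates.mk s.prod).subset ?_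
  rintro _ ⟨x, hx, rfl⟩
  have hx0 : x ≠ 0 := ne_zero_of_dvd_ne_zero hy hx
  refine ⟨normalizedFactors x, ?_, Associates.mk_eq_mk_iff_associated.mpr
    (prod_normalizedFactors hx0)⟩
  simpa using (dvd_iff_normalizedFactors_le_normalizedFactors hx0 hy).mp hx

theorem Set.Finite.image_of_finite_image_fibers {α β γ : Type*} {s : Set α} (f : α → β)
    (g : α → γ) (hg : (g '' s).Finite) (hfib : ∀ y ∈ g '' s, (f '' {x ∈ s | g x = y}).Finite) :
    (f '' s).Finite :=
  (hg.biUnion hfib).subset <| by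
    rintro _ ⟨x, hx, rfl⟩
    exact Set.mem_biUnion ⟨x, hx, rfl⟩ ⟨x, ⟨hx, rfl⟩, rfl⟩

theorem IsMCD.eq_zero_of_empty {D : Type*} [CommMonoidWithZero D] {c : D} (hc : IsMCD ∅ c) :
    c = 0 :=
  (associated_zero_iff_eq_zero c).mp (hc.2 0 (by simp) (dvd_zero c))

namespace Polynomial

section Semiring

variable {R : Type*} [CommSemiring R]

theorem C_dvd_iff_forall_mem_coeffs {r : R} {p : R[X]} : C r ∣ p ↔ ∀ t ∈ p.coeffs, r ∣ t := by
  rw [C_dvd_iff_dvd_coeff]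
  refine ⟨fun h t ht => ?_, fun h n => ?_⟩
  · obtain ⟨n, -, rfl⟩ := mem_coeffs_iff.mp ht
    exact h n
  · by_cases hn : p.coeff n = 0
    · simp [hn]
    · exact h _ (coeff_mem_coeffs hn)

theorem zero_notMem_coeffs (p : R[X]) : 0 ∉ p.coeffs := by
  intro h
  obtain ⟨n, hn, h0⟩ := mem_coeffs_iff.mp h
  exact mem_support_iff.mp hn h0.symm

theorem coeffs_C_add_X_mul [DecidableEq R] {a : R} (ha : a ≠ 0) (p : R[X]) :
    (C a + X * p).coeffs = insert a p.coeffs := by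
  ext t
  simp only [mem_coeffs_iff, mem_support_iff, Finset.mem_insert]
  constructor
  · rintro ⟨n, hn, rfl⟩
    cases n with
    | zero => left; simp
    | succ n => right; exact ⟨n, by simpa using hn, by simp⟩
  · rintro (rfl | ⟨n, hn, rfl⟩)
    · exact ⟨0, by simpa using ha, by simp⟩
    · exact ⟨n + 1, by simpa using hn, by simp⟩

theorem exists_coeffs_eq (s : Finset R) (hs : 0 ∉ s) : ∃ p : R[X], p.coeffs = s := by
  classical
  induction s using Finset.induction_on with
  | empty => exact ⟨0, coeffs_zero⟩
  | insert a s _ ih =>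
    obtain ⟨p, hp⟩ := ih fun h => hs (Finset.mem_insert_of_mem h)
    exact ⟨C a + X * p, by
      rw [coeffs_C_add_X_mul (fun h => hs (h ▸ Finset.mem_insert_self a s)), hp]⟩

theorem IsPrimitive.isUnit_of_natDegree_eq_zero {p : R[X]} (hp : p.IsPrimitive)
    (hdeg : p.natDegree = 0) : IsUnit p := by
  rw [eq_C_of_natDegree_eq_zero hdeg] at hp ⊢
  exact isUnit_C.mpr (hp _ dvd_rfl)

theorem isMCD_coeffs_iff {p : R[X]} {b : R} :
    IsMCD (p.coeffs : Set R) b ↔ C b ∣ p ∧ ∀ d, C d ∣ p → b ∣ d → Associated b d := by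
  simp only [IsMCD, Finset.mem_coe, ← C_dvd_iff_forall_mem_coeffs]

variable {K : Type*} [Field K] {φ : R →+* K} in
theorem eq_of_associated_map_of_leadingCoeff_eq (hφ : Function.Injective φ) {a b : R[X]}
    (hab : Associated (a.map φ) (b.map φ)) (hlc : a.leadingCoeff = b.leadingCoeff) : a = b := by
  obtain ⟨u, hu⟩ := hab
  obtain ⟨μ, -, hμ⟩ := Polynomial.isUnit_iff.mp u.isUnit
  rw [← hμ] at hu
  rcases eq_or_ne a 0 with rfl | ha
  · exact ((Polynomial.map_eq_zero_iff hφ).mp (by simpa using hu.symm)).symm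
  have hμ1 : μ = 1 := by
    have := congrArg leadingCoeff hu
    rw [leadingCoeff_mul, leadingCoeff_C, leadingCoeff_map_of_injective hφ,
      leadingCoeff_map_of_injective hφ, ← hlc] at this
    exact (mul_eq_left₀ ((map_ne_zero_iff φ hφ).mpr (leadingCoeff_ne_zero.mpr ha))).mp this
  apply map_injective φ hφ
  rw [← hu, hμ1, C_1, mul_one]

end Semiring

variable {D : Type*} [CommRing D] [IsDomain D]

theorem isMCD_coeffs_mul_C_iff {p : D[X]} {b : D} (hb : b ≠ 0) :
    IsMCD ((p * C b).coeffs : Set D) b ↔ p.IsPrimitive := by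
  rw [isMCD_coeffs_iff]
  refine ⟨fun ⟨_, hmax⟩ r hr => ?_, fun hp => ⟨dvd_mul_left _ _, ?_⟩⟩
  · have hbr : C (b * r) ∣ p * C b := by
      rw [map_mul, mul_comm (C b)]
      exact mul_dvd_mul_right hr _
    exact isUnit_of_associated_mul (hmax _ hbr (dvd_mul_right b r)).symm hb
  · rintro _ hd ⟨e, rfl⟩
    rw [map_mul, mul_comm p] at hd
    exact associated_mul_unit_right b e (hp e ((mul_dvd_mul_iff_left (C_ne_zero.mpr hb)).mp hd))

theorem irreducible_C_iff {a : D} : Irreducible (C a) ↔ Irreducible a := by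
  refine ⟨Irreducible.of_map, fun ha => ⟨mt isUnit_C.mp ha.not_isUnit, fun u v huv => ?_⟩⟩
  have hC : C a ≠ 0 := C_ne_zero.mpr ha.ne_zero
  have hdeg := congrArg natDegree huv
  rw [natDegree_C, natDegree_mul (left_ne_zero_of_mul (huv ▸ hC))
    (right_ne_zero_of_mul (huv ▸ hC))] at hdeg
  obtain ⟨u, rfl⟩ : ∃ c, u = C c := ⟨_, eq_C_of_natDegree_eq_zero (by omega)⟩
  obtain ⟨v, rfl⟩ : ∃ c, v = C c := ⟨_, eq_C_of_natDegree_eq_zero (by omega)⟩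
  simpa only [isUnit_C] using ha.isUnit_or_isUnit (C_injective (huv.trans (C_mul).symm))

theorem IsPrimitive.exists_mul_eq_of_not_irreducible {g : D[X]} (hg : g.IsPrimitive)
    (hu : ¬IsUnit g) (hi : ¬Irreducible g) :
    ∃ u v, u * v = g ∧ u.IsPrimitive ∧ v.IsPrimitive ∧ u.natDegree < g.natDegree ∧
      v.natDegree < g.natDegree := by
  obtain ⟨u, v, rfl, hu, hv⟩ : ∃ u v, g = u * v ∧ ¬IsUnit u ∧ ¬IsUnit v := by
    simpa [irreducible_iff, hu] using hi
  have hpu := isPrimitive_of_dvd hg (dvd_mul_right u v)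
  have hpv := isPrimitive_of_dvd hg (dvd_mul_left v u)
  have hdu : u.natDegree ≠ 0 := fun h => hu (hpu.isUnit_of_natDegree_eq_zero h)
  have hdv : v.natDegree ≠ 0 := fun h => hv (hpv.isUnit_of_natDegree_eq_zero h)
  rw [natDegree_mul hpu.ne_zero hpv.ne_zero]
  exact ⟨u, v, rfl, hpu, hpv, by omega, by omega⟩

open Pointwise in
theorem finite_image_mk_isPrimitive_dvd (hIDF : IsIDFDomain D[X]) {f : D[X]} (hf : f ≠ 0) :
    (Associates.mk '' {g : D[X] | g.IsPrimitive ∧ g ∣ f}).Finite := by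
  let S (n : ℕ) := Associates.mk '' {g : D[X] | g.IsPrimitive ∧ g ∣ f ∧ g.natDegree < n}
  have hS : ∀ n, (S n).Finite := by
    intro n
    induction n with
    | zero => simp [S]
    | succ n ih =>
      refine (((Set.finite_singleton 1).union (hIDF f hf)).union (ih.mul ih)).subset ?_
      rintro _ ⟨g, ⟨hg, hgf, hdeg⟩, rfl⟩
      by_cases hu : IsUnit g
      · exact .inl (.inl (Associates.mk_eq_one.mpr hu))
      by_cases hi : Irreducible g
      · exact .inl (.inr ⟨g, ⟨hi, hgf⟩, rfl⟩)
      obtain ⟨u, v, rfl, hpu, hpv, hdu, hdv⟩ := hg.exists_mul_eq_of_not_irreducible hu hi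
      exact .inr ⟨_, ⟨u, ⟨hpu, (dvd_mul_right u v).trans hgf, by omega⟩, rfl⟩,
        _, ⟨v, ⟨hpv, (dvd_mul_left v u).trans hgf, by omega⟩, rfl⟩, Associates.mk_mul_mk⟩
  refine (hS (f.natDegree + 1)).subset ?_
  rintro _ ⟨g, ⟨hg, hgf⟩, rfl⟩
  exact ⟨g, ⟨hg, hgf, Nat.lt_succ_of_le (natDegree_le_of_dvd hgf hf)⟩, rfl⟩

theorem finite_image_mk_isMCD_coeffs (hIDF : IsIDFDomain D[X]) (f : D[X]) :
    (Associates.mk '' {c | IsMCD (f.coeffs : Set D) c}).Finite := by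
  rcases eq_or_ne f 0 with rfl | hf
  · refine (Set.finite_singleton (Associates.mk 0)).subset ?_
    rintro _ ⟨c, hc, rfl⟩
    rw [coeffs_zero, Finset.coe_empty] at hc
    rw [hc.eq_zero_of_empty]
    rfl
  have hC : (Associates.mk '' (C '' {c | IsMCD (f.coeffs : Set D) c})).Finite := by
    refine Associates.finite_image_mk_of_forall_exists_mul_eq hf
      (finite_image_mk_isPrimitive_dvd hIDF hf) ?_
    rintro _ ⟨c, hc, rfl⟩
    obtain ⟨g, rfl⟩ := (isMCD_coeffs_iff.mp hc).1
    have hc0 : c ≠ 0 := by rintro rfl; simp at hf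
    rw [mul_comm] at hc
    exact ⟨g, ⟨(isMCD_coeffs_mul_C_iff hc0).mp hc, dvd_mul_left g (C c)⟩, rfl⟩
  simpa [Set.image_image] using Associates.finite_image_mk_image constantCoeff hC

theorem finite_image_mk_isPrimitive_mul_C_eq (hMCD : MCDFinite D) {h : D[X]} (hh : h ≠ 0) :
    (Associates.mk '' {p : D[X] | p.IsPrimitive ∧ ∃ b, p * C b = h}).Finite := by
  have hMCDs := hMCD _ h.coeffs.finite_toSet fun t ht h0 => zero_notMem_coeffs h (h0 ▸ ht)
  refine Associates.finite_image_mk_of_forall_exists_mul_eq hh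
    (Associates.finite_image_mk_image C hMCDs) ?_
  rintro p ⟨hp, b, rfl⟩
  have hb : b ≠ 0 := by rintro rfl; simp at hh
  exact ⟨C b, ⟨b, (isMCD_coeffs_mul_C_iff hb).mpr hp, rfl⟩, rfl⟩

variable {K : Type*} [Field K] {φ : D →+* K} in
theorem mul_C_leadingCoeff_eq_of_associated_map (hφ : Function.Injective φ) {p q g r : D[X]}
    (hpq : p * q = g * r) (hgr : g * r ≠ 0) (hassoc : Associated (p.map φ) (g.map φ)) :
    p * C q.leadingCoeff = g * C r.leadingCoeff := by
  have hunit {s : D[X]} (hs : s ≠ 0) : IsUnit (C (φ s.leadingCoeff)) :=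
    isUnit_C.mpr (isUnit_iff_ne_zero.mpr ((map_ne_zero_iff φ hφ).mpr (leadingCoeff_ne_zero.mpr hs)))
  apply eq_of_associated_map_of_leadingCoeff_eq hφ
  · simp only [Polynomial.map_mul, map_C]
    exact ((associated_mul_unit_left _ _ (hunit (right_ne_zero_of_mul (hpq ▸ hgr)))).trans
      hassoc).trans (associated_mul_unit_right _ _ (hunit (right_ne_zero_of_mul hgr)))
  · rw [leadingCoeff_mul, leadingCoeff_mul, leadingCoeff_C, leadingCoeff_C, ← leadingCoeff_mul,
      ← leadingCoeff_mul, hpq]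

theorem finite_image_mk_irreducible_dvd_of_natDegree_eq_zero (hIDF : IsIDFDomain D) {f : D[X]}
    (hf : f ≠ 0) :
    (Associates.mk '' {p : D[X] | (Irreducible p ∧ p ∣ f) ∧ p.natDegree = 0}).Finite := by
  refine (Associates.finite_image_mk_image C (hIDF _ (leadingCoeff_ne_zero.mpr hf))).subset ?_
  rintro _ ⟨p, ⟨⟨hp, hpf⟩, hdeg⟩, rfl⟩
  rw [eq_C_of_natDegree_eq_zero hdeg] at hp hpf ⊢
  exact ⟨_, ⟨_, ⟨irreducible_C_iff.mp hp, (C_dvd_iff_dvd_coeff _ _).mp hpf _⟩, rfl⟩, rfl⟩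

theorem finite_image_mk_irreducible_dvd_of_natDegree_ne_zero (hMCD : MCDFinite D) {f : D[X]}
    (hf : f ≠ 0) :
    (Associates.mk '' {p : D[X] | (Irreducible p ∧ p ∣ f) ∧ p.natDegree ≠ 0}).Finite := by
  let φ := algebraMap D (FractionRing D)
  have hφ : Function.Injective φ := IsFractionRing.injective D (FractionRing D)
  refine Set.Finite.image_of_finite_image_fibers _ (fun p => Associates.mk (p.map φ)) ?_ ?_
  · refine (UniqueFactorizationMonoid.finite_image_mk_dvd
      ((Polynomial.map_ne_zero_iff hφ).mpr hf)).subset ?_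
    rintro _ ⟨p, ⟨⟨-, hpf⟩, -⟩, rfl⟩
    exact ⟨p.map φ, Polynomial.map_dvd φ hpf, rfl⟩
  · rintro _ ⟨g, ⟨⟨-, r, hgr⟩, -⟩, rfl⟩
    have hgr0 : g * r ≠ 0 := hgr ▸ hf
    refine (finite_image_mk_isPrimitive_mul_C_eq hMCD (h := g * C r.leadingCoeff)
      (mul_ne_zero (left_ne_zero_of_mul hgr0)
        (C_ne_zero.mpr (leadingCoeff_ne_zero.mpr (right_ne_zero_of_mul hgr0))))).subset ?_
    rintro _ ⟨p, ⟨⟨⟨hp, q, hpq⟩, hdeg⟩, hφp⟩, rfl⟩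
    exact ⟨p, ⟨hp.isPrimitive hdeg, q.leadingCoeff, mul_C_leadingCoeff_eq_of_associated_map hφ
      (hpq.symm.trans hgr) hgr0 (Associates.mk_eq_mk_iff_associated.mp hφp)⟩, rfl⟩

end Polynomial

section

variable {D : Type*} [CommRing D] [IsDomain D]

theorem IsIDFDomain.of_polynomial (h : IsIDFDomain D[X]) : IsIDFDomain D := by
  intro a ha
  have hC : (Associates.mk '' (C '' {p : D | Irreducible p ∧ p ∣ a})).Finite := by
    refine (h (C a) (C_ne_zero.mpr ha)).subset (Set.image_mono ?_)
    rintro _ ⟨p, ⟨hp, hpa⟩, rfl⟩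
    exact ⟨irreducible_C_iff.mpr hp, map_dvd C hpa⟩
  simpa [Set.image_image] using Associates.finite_image_mk_image constantCoeff hC

theorem MCDFinite.of_isIDFDomain_polynomial (h : IsIDFDomain D[X]) : MCDFinite D := by
  intro T hT hT0
  obtain ⟨f, hf⟩ := exists_coeffs_eq hT.toFinset (by simpa using fun h0 => hT0 0 h0 rfl)
  have hfT : (f.coeffs : Set D) = T := by rw [hf, Set.Finite.coe_toFinset]
  exact hfT ▸ finite_image_mk_isMCD_coeffs h f

theorem IsIDFDomain.polynomial (hIDF : IsIDFDomain D) (hMCD : MCDFinite D) :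
    IsIDFDomain D[X] := by
  intro f hf
  refine ((finite_image_mk_irreducible_dvd_of_natDegree_eq_zero hIDF hf).union
    (finite_image_mk_irreducible_dvd_of_natDegree_ne_zero hMCD hf)).subset ?_
  rw [← Set.image_union]
  exact Set.image_mono fun p hp => (em _).imp (⟨hp, ·⟩) (⟨hp, ·⟩)

end

/-- For an integral domain `D`, the polynomial ring `D[X]` is an IDF domain if and only
if `D` is both an IDF domain and MCD-finite. -/
theorem polynomial_isIDF_iff_isIDF_and_mcdFinite (D : Type*) [CommRing D] [IsDomain D] :
    IsIDFDomain (Polynomial D) ↔ IsIDFDomain D ∧ MCDFinite D :=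
  ⟨fun h => ⟨h.of_polynomial, .of_isIDFDomain_polynomial h⟩,
    fun ⟨hIDF, hMCD⟩ => hIDF.polynomial hMCD⟩
end

section
/- Let D be an integral domain that is both IDF and MCD-finite. Then for any set X̄ of indeterminates (of arbitrary cardinality), the polynomial ring D[X̄] (i.e., the multivariate polynomial ring MvPolynomial X̄ D) is an IDF domain. -/
open MvPolynomial

theorem finite_associates_image {F M N : Type*} [Monoid M] [Monoid N] [FunLike F M N]
    [MonoidHomClass F M N] (f : F) {s : Set M} (hs : (Associates.mk '' s).Finite) :
    (Associates.mk '' (f '' s)).Finite := by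
  let g : Associates M → Associates N := Quotient.map f fun _ _ h => h.map f
  have hg : Associates.mk '' (f '' s) = g '' (Associates.mk '' s) := by
    simp only [Set.image_image]
    rfl
  exact hg ▸ hs.image g

theorem UniqueFactorizationMonoid.finite_associates_dvd {M : Type*} [CommMonoidWithZero M]
    [UniqueFactorizationMonoid M] {y : M} (hy : y ≠ 0) :
    (Associates.mk '' {x : M | x ∣ y}).Finite := by
  have := fintypeSubtypeDvd (Associates.mk y) (Associates.mk_ne_zero.mpr hy)
  have hdvd : {x | x ∣ Associates.mk y}.Finite :=
    Set.finite_coe_iff.mp (Finite.of_fintype {x // x ∣ Associates.mk y})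
  exact hdvd.subset (Set.image_subset_iff.mpr fun _ hx => Associates.mk_dvd_mk.mpr hx)

theorem Set.Finite.image_of_finite_fibers {α β γ : Type*} (π : α → γ) (F : α → β) {s : Set α}
    (himage : (F '' s).Finite) (hfibers : ∀ a ∈ s, (π '' (s ∩ F ⁻¹' {F a})).Finite) :
    (π '' s).Finite := by
  refine (himage.biUnion (t := fun y => π '' (s ∩ F ⁻¹' {y})) ?_).subset ?_
  · rintro _ ⟨a, ha, rfl⟩
    exact hfibers a ha
  · rintro _ ⟨a, ha, rfl⟩
    exact Set.mem_biUnion ⟨a, ha, rfl⟩ ⟨a, ⟨ha, rfl⟩, rfl⟩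

namespace MvPolynomial

variable {σ R : Type*}

def IsPrimitive [CommSemiring R] (p : MvPolynomial σ R) : Prop :=
  ∀ r : R, C r ∣ p → IsUnit r

variable [CommRing R]

theorem isPrimitive_of_irreducible [IsDomain R] {p : MvPolynomial σ R} (hp : Irreducible p)
    (hpC : ∀ r, p ≠ C r) : p.IsPrimitive := by
  rintro r ⟨q, rfl⟩
  rcases hp.isUnit_or_isUnit rfl with hr | hq
  · exact isUnit_of_map_unit C r hr
  · obtain ⟨s, -, rfl⟩ := isUnit_iff_eq_C_of_isReduced.mp hq
    exact absurd (C_mul ..).symm (hpC (r * s))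

theorem IsPrimitive.isMCD_coeffs_C_mul [IsDomain R] {p : MvPolynomial σ R} (hp : p.IsPrimitive)
    {a : R} (ha : a ≠ 0) : IsMCD ↑(C a * p).coeffs a := by
  refine ⟨fun t ht => ?_, fun d hd ⟨e, hde⟩ => ?_⟩
  · obtain ⟨n, -, rfl⟩ := mem_coeffs_iff.mp ht
    rw [coeff_C_mul]
    exact dvd_mul_right _ _
  · subst hde
    have he : ∀ n, e ∣ coeff n p := fun n => by
      by_cases hn : coeff n p = 0
      · simp [hn]
      · have := hd _ (coeff_mem_coeffs n (by rw [coeff_C_mul]; exact mul_ne_zero ha hn))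
        rw [coeff_C_mul] at this
        exact (mul_dvd_mul_iff_left ha).mp this
    exact associated_mul_unit_right a e (hp e ((C_dvd_iff_dvd_coeff e p).mpr he))

theorem associated_of_C_mul_eq_C_mul [IsDomain R] {a b : R} {p q : MvPolynomial σ R} (ha : a ≠ 0)
    (hab : Associated a b) (h : C a * p = C b * q) : Associated p q := by
  obtain ⟨u, rfl⟩ := hab
  refine Associated.symm ⟨Units.map C.toMonoidHom u, mul_left_cancel₀ (C_ne_zero.mpr ha) ?_⟩
  simp only [Units.coe_map, RingHom.toMonoidHom_eq_coe, MonoidHom.coe_coe, h, C_mul]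
  ring

theorem finite_associates_isPrimitive_C_mul_eq [IsDomain R] (hR : MCDFinite R)
    {q : MvPolynomial σ R} (hq : q ≠ 0) :
    (Associates.mk '' {p | p.IsPrimitive ∧ ∃ a, C a * p = q}).Finite := by
  have hT : ∀ t ∈ (q.coeffs : Set R), t ≠ 0 := fun t ht => by
    obtain ⟨n, hn, rfl⟩ := mem_coeffs_iff.mp ht
    exact mem_support_iff.mp hn
  let classOf (c : Associates R) : Set (Associates (MvPolynomial σ R)) :=
    {x | ∃ p a, x = Associates.mk p ∧ Associates.mk a = c ∧ C a * p = q}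
  refine ((hR _ q.coeffs.finite_toSet hT).biUnion (t := classOf) fun c _ => ?_).subset ?_
  · refine Set.Subsingleton.finite ?_
    rintro _ ⟨p, a, rfl, rfl, hp⟩ _ ⟨p', a', rfl, haa', hp'⟩
    have ha : a ≠ 0 := by rintro rfl; simp [← hp] at hq
    exact Associates.mk_eq_mk_iff_associated.mpr <| associated_of_C_mul_eq_C_mul ha
      (Associates.mk_eq_mk_iff_associated.mp haa'.symm) (hp.trans hp'.symm)
  · rintro _ ⟨p, ⟨hp, a, rfl⟩, rfl⟩
    have ha : a ≠ 0 := by rintro rfl; simp at hq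
    exact Set.mem_biUnion ⟨a, hp.isMCD_coeffs_C_mul ha, rfl⟩ ⟨p, a, rfl, rfl, rfl⟩

theorem exists_C_mul_eq_of_associated_map {K : Type*} [CommRing K] [IsDomain K] [IsDomain R]
    (φ : R →+* K) (hφ : Function.Injective φ) {f g : MvPolynomial σ R} (hf : f ≠ 0)
    (hg : g ∣ f) : ∃ q ≠ 0, ∀ p, p ∣ f → Associated (map φ p) (map φ g) → ∃ a, C a * p = q := by
  obtain ⟨h, rfl⟩ := hg
  obtain ⟨hg0, hh0⟩ := mul_ne_zero_iff.mp hf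
  obtain ⟨j, hj⟩ := ne_zero_iff.mp hh0
  -- the scalar relating `p` and `g` over `K` is read off the `j`-th coefficients of the cofactors
  refine ⟨C (coeff j h) * g, mul_ne_zero (C_ne_zero.mpr hj) hg0, fun p ⟨k, hk⟩ ⟨u, hu⟩ => ?_⟩
  obtain ⟨κ, -, hκ⟩ := isUnit_iff_eq_C_of_isReduced.mp u.isUnit
  have hp0 : map φ p ≠ 0 := fun hp =>
    hg0 (map_injective φ hφ (by rw [map_zero, ← hu, hp, zero_mul]))
  have hk' : map φ k = C κ * map φ h := mul_left_cancel₀ hp0 <| by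
    rw [← map_mul, ← hk, map_mul, ← hu, hκ]
    ring
  have hcoeff : φ (coeff j k) = κ * φ (coeff j h) := by
    simpa only [coeff_map, coeff_C_mul] using congr_arg (coeff j) hk'
  refine ⟨coeff j k, map_injective φ hφ ?_⟩
  simp only [map_mul, map_C, hcoeff, ← hu, hκ]
  ring

theorem finite_associates_isPrimitive_dvd [IsDomain R] (hR : MCDFinite R) {f : MvPolynomial σ R}
    (hf : f ≠ 0) : (Associates.mk '' {p | p.IsPrimitive ∧ p ∣ f}).Finite := by
  let φ := algebraMap R (FractionRing R)
  have hφ : Function.Injective φ := IsFractionRing.injective R (FractionRing R)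
  refine Set.Finite.image_of_finite_fibers _ (fun p => Associates.mk (map φ p)) ?_
    fun g ⟨_, hg⟩ => ?_
  · refine (UniqueFactorizationMonoid.finite_associates_dvd
      fun h => hf (map_injective φ hφ (h.trans (map_zero _).symm))).subset ?_
    rintro _ ⟨p, ⟨-, hp⟩, rfl⟩
    exact ⟨map φ p, map_dvd _ hp, rfl⟩
  · obtain ⟨q, hq, hpq⟩ := exists_C_mul_eq_of_associated_map φ hφ hf hg
    refine (finite_associates_isPrimitive_C_mul_eq hR hq).subset (Set.image_mono ?_)
    rintro p ⟨⟨hp, hpf⟩, hpg⟩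
    exact ⟨hp, hpq p hpf (Associates.mk_eq_mk_iff_associated.mp hpg)⟩

theorem finite_associates_irreducible_C_dvd (hR : IsIDFDomain R) {f : MvPolynomial σ R}
    (hf : f ≠ 0) : (Associates.mk '' {p | Irreducible p ∧ p ∣ f ∧ ∃ r, p = C r}).Finite := by
  obtain ⟨m, hm⟩ := ne_zero_iff.mp hf
  refine (finite_associates_image C (hR _ hm)).subset (Set.image_mono ?_)
  rintro _ ⟨hp, hpf, r, rfl⟩
  exact ⟨r, ⟨hp.of_map, (C_dvd_iff_dvd_coeff r f).mp hpf m⟩, rfl⟩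

end MvPolynomial

/-- If an integral domain `D` is both IDF and MCD-finite, then for any set `σ` of
indeterminates the multivariate polynomial ring `D[σ]` is an IDF domain. -/
theorem mvPolynomial_isIDF_of_isIDF_and_mcdFinite (D : Type*) [CommRing D] [IsDomain D]
    (hIDF : IsIDFDomain D) (hMCD : MCDFinite D) (σ : Type*) :
    IsIDFDomain (MvPolynomial σ D) := by
  intro f hf
  refine ((finite_associates_irreducible_C_dvd hIDF hf).union
    (finite_associates_isPrimitive_dvd hMCD hf)).subset ?_
  rw [← Set.image_union]
  refine Set.image_mono fun p ⟨hp, hpf⟩ => ?_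
  by_cases hC : ∃ r, p = C r
  · exact Or.inl ⟨hp, hpf, hC⟩
  · exact Or.inr ⟨isPrimitive_of_irreducible hp (not_exists.mp hC), hpf⟩
end

section
/- Let D be an integral domain and let f be a non-unit polynomial in D[X] such that every common divisor in D of the coefficients of f is a unit (equivalently, the only common divisors of the coefficients of f are units). Then f can be written as a finite product of irreducible elements of D[X]. -/
/-!
A primitive polynomial has primitive factors, and a non-unit primitive polynomial has positive
degree. So a primitive non-unit that is not irreducible splits as a product of two primitive
non-units of strictly smaller degree, and induction on the degree ends in irreducible factors.
-/

namespace Polynomial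

section CommSemiring

variable {R : Type*} [CommSemiring R]

theorem isPrimitive_iff_forall_dvd_coeff {p : R[X]} :
    p.IsPrimitive ↔ ∀ r : R, (∀ n, r ∣ p.coeff n) → IsUnit r := by
  simp only [isPrimitive_iff_isUnit_of_C_dvd, C_dvd_iff_dvd_coeff]

theorem IsPrimitive.natDegree_pos {p : R[X]} (hp : p.IsPrimitive) (hu : ¬IsUnit p) :
    0 < p.natDegree := by
  by_contra! h
  have hC : p = C (p.coeff 0) := eq_C_of_natDegree_le_zero h
  exact hu (hC ▸ isUnit_C.mpr (hp _ (hC ▸ dvd_rfl)))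

end CommSemiring

variable {R : Type*} [CommRing R] [IsDomain R]

theorem IsPrimitive.exists_multiset_irreducible_prod {p : R[X]} (hp : p.IsPrimitive)
    (hu : ¬IsUnit p) : ∃ s : Multiset R[X], (∀ g ∈ s, Irreducible g) ∧ s.prod = p := by
  induction hn : p.natDegree using Nat.strong_induction_on generalizing p with
  | _ n ih =>
  by_cases hirr : Irreducible p
  · exact ⟨{p}, by simpa using hirr, Multiset.prod_singleton p⟩
  obtain ⟨g, h, rfl, hg, hh⟩ : ∃ g h, p = g * h ∧ ¬IsUnit g ∧ ¬IsUnit h := by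
    simpa [irreducible_iff, hu] using hirr
  have hgp : g.IsPrimitive := isPrimitive_of_dvd hp (dvd_mul_right g h)
  have hhp : h.IsPrimitive := isPrimitive_of_dvd hp (dvd_mul_left h g)
  have hdeg : (g * h).natDegree = g.natDegree + h.natDegree :=
    natDegree_mul hgp.ne_zero hhp.ne_zero
  obtain ⟨s, hs, rfl⟩ :=
    ih _ (by have := hhp.natDegree_pos hh; omega) hgp hg rfl
  obtain ⟨t, ht, rfl⟩ :=
    ih _ (by have := hgp.natDegree_pos hg; omega) hhp hh rfl
  refine ⟨s + t, fun q hq => ?_, Multiset.prod_add s t⟩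
  exact (Multiset.mem_add.mp hq).elim (hs q) (ht q)

end Polynomial

/-- Let `D` be an integral domain and let `f ∈ D[X]` be a non-unit polynomial such that
every common divisor in `D` of the coefficients of `f` is a unit. Then `f` is a finite
product of irreducible elements of `D[X]`. -/
theorem exists_factorization_of_coeffs_coprime (D : Type*) [CommRing D] [IsDomain D]
    (f : Polynomial D) (hf : ¬ IsUnit f)
    (hcoeff : ∀ d : D, (∀ n : ℕ, d ∣ f.coeff n) → IsUnit d) :
    ∃ s : Multiset (Polynomial D), (∀ g ∈ s, Irreducible g) ∧ s.prod = f :=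
  (Polynomial.isPrimitive_iff_forall_dvd_coeff.mpr hcoeff).exists_multiset_irreducible_prod hf
end

section
/- Let D be a pre-Schreier integral domain. Then every finite subset of the nonzero elements of D has at most one maximal common divisor up to associates; in particular, D is MCD-finite. -/
/-! A pre-Schreier domain has Riesz interpolation: if `a₁, a₂ ∣ b₁, b₂` then some `c` satisfies
`a₁, a₂ ∣ c ∣ b₁, b₂`. Inductively, the common divisors of a finite set are then directed under
divisibility, so two maximal common divisors both divide a common divisor `m`, and maximality makes
each of them associated to `m`. -/

theorem DecompositionMonoid.of_isPrimal_of_ne_zero {α : Type*} [MonoidWithZero α]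
    (h : ∀ a : α, a ≠ 0 → IsPrimal a) : DecompositionMonoid α :=
  ⟨fun a => (eq_or_ne a 0).elim (fun ha => ha ▸ isPrimal_zero) (h a)⟩

section Interpolation

variable {α : Type*} [CommMonoidWithZero α] [IsCancelMulZero α] [DecompositionMonoid α]

theorem exists_dvd_between_of_dvd_of_dvd {a₁ a₂ b₁ b₂ : α} (h₁₁ : a₁ ∣ b₁) (h₁₂ : a₁ ∣ b₂)
    (h₂₁ : a₂ ∣ b₁) (h₂₂ : a₂ ∣ b₂) : ∃ c, a₁ ∣ c ∧ a₂ ∣ c ∧ c ∣ b₁ ∧ c ∣ b₂ := by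
  rcases eq_or_ne b₁ 0 with rfl | hb₁
  · exact ⟨b₂, h₁₂, h₂₂, dvd_zero _, dvd_rfl⟩
  obtain ⟨w, rfl⟩ := h₁₁
  obtain ⟨q, rfl⟩ := h₁₂
  obtain ⟨p, hp⟩ := h₂₁
  obtain ⟨r, hr⟩ := h₂₂
  have ha₁ : a₁ ≠ 0 := left_ne_zero_of_mul hb₁
  have ha₂ : a₂ ≠ 0 := left_ne_zero_of_mul (hp ▸ hb₁)
  -- `(a₂ p) (a₁ q) = (a₁ w) (a₂ r)`, so `w ∣ p q`, and splitting `w` along `p q` gives the witness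
  have hw : w ∣ p * q := ⟨r, mul_left_cancel₀ (mul_ne_zero ha₁ ha₂) <| by
    calc a₁ * a₂ * (p * q) = a₂ * p * (a₁ * q) := by ac_rfl
      _ = a₁ * w * (a₂ * r) := by rw [← hp, hr]
      _ = a₁ * a₂ * (w * r) := by ac_rfl⟩
  obtain ⟨x, y, ⟨p', rfl⟩, hy, rfl⟩ := exists_dvd_and_dvd_of_dvd_mul hw
  have hx : x ≠ 0 := left_ne_zero_of_mul (right_ne_zero_of_mul hb₁)
  have hc : a₁ * y = a₂ * p' := mul_left_cancel₀ hx <| by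
    calc x * (a₁ * y) = a₁ * (x * y) := by ac_rfl
      _ = a₂ * (x * p') := hp
      _ = x * (a₂ * p') := by ac_rfl
  exact ⟨a₁ * y, dvd_mul_right _ _, hc ▸ dvd_mul_right _ _,
    mul_dvd_mul_left _ (dvd_mul_left _ _), mul_dvd_mul_left _ hy⟩

theorem Set.Finite.directedOn_dvd_commonDivisors {T : Set α} (hT : T.Finite) :
    DirectedOn (· ∣ ·) {c : α | ∀ t ∈ T, c ∣ t} := by
  induction T, hT using Set.Finite.induction_on with
  | empty => exact fun _ _ _ _ => ⟨0, by simp, dvd_zero _, dvd_zero _⟩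
  | @insert s T _ _ ih =>
    intro c hc d hd
    simp only [Set.mem_ofPred_eq, Set.forall_mem_insert] at hc hd
    obtain ⟨m, hm, hcm, hdm⟩ := ih c hc.2 d hd.2
    obtain ⟨e, hce, hde, hem, hes⟩ := exists_dvd_between_of_dvd_of_dvd hcm hc.1 hdm hd.1
    exact ⟨e, Set.forall_mem_insert.2 ⟨hes, fun t ht => hem.trans (hm t ht)⟩, hce, hde⟩

end Interpolation

theorem IsMCD.associated_of_directedOn {α : Type*} [CommMonoidWithZero α] {T : Set α} {c d : α}
    (hT : DirectedOn (· ∣ ·) {c : α | ∀ t ∈ T, c ∣ t}) (hc : IsMCD T c) (hd : IsMCD T d) :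
    Associated c d :=
  let ⟨m, hm, hcm, hdm⟩ := hT c hc.1 d hd.1
  (hc.2 m hm hcm).trans (hd.2 m hm hdm).symm

/-- In a pre-Schreier integral domain (every nonzero element is primal), every finite
subset of nonzero elements has at most one maximal common divisor up to associates;
in particular the domain is MCD-finite. -/
theorem preSchreier_mcd_unique_and_mcdFinite (D : Type*) [CommRing D] [IsDomain D]
    (hps : ∀ a : D, a ≠ 0 → ∀ b c : D, a ∣ b * c →
      ∃ a₁ a₂ : D, a = a₁ * a₂ ∧ a₁ ∣ b ∧ a₂ ∣ c) :
    (∀ T : Set D, T.Finite → (∀ t ∈ T, t ≠ 0) →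
      ∀ c d : D, IsMCD T c → IsMCD T d → Associated c d) ∧ MCDFinite D := by
  have := DecompositionMonoid.of_isPrimal_of_ne_zero fun a ha b c hbc =>
    let ⟨a₁, a₂, h, h₁, h₂⟩ := hps a ha b c hbc
    ⟨a₁, a₂, h₁, h₂, h⟩
  have unique : ∀ T : Set D, T.Finite → (∀ t ∈ T, t ≠ 0) →
      ∀ c d : D, IsMCD T c → IsMCD T d → Associated c d :=
    fun _ hT _ _ _ hc hd => hc.associated_of_directedOn hT.directedOn_dvd_commonDivisors hd
  refine ⟨unique, fun T hT hT0 => Set.Subsingleton.finite ?_⟩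
  rintro _ ⟨c, hc, rfl⟩ _ ⟨d, hd, rfl⟩
  exact Associates.mk_eq_mk_iff_associated.2 (unique T hT hT0 c d hc hd)
end

section
/- Let D be a GCD domain that is also an IDF domain. Then the polynomial ring D[X] is an IDF domain. -/
/-!
Split the irreducible divisors of `f ≠ 0` in `D[X]` by degree. A constant one is `C c` with `c`
irreducible in `D` and dividing the leading coefficient of `f`, so there are finitely many of
these by the IDF property of `D`. A nonconstant one is primitive, so by Gauss's lemma it is
determined up to associates by its image in `K[X]`, `K` the fraction field; there it divides
the image of `f`, which has finitely many divisors up to associates since `K[X]` is a UFD.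
-/

open Polynomial

namespace Associates

variable {M N F : Type*} [Monoid M] [Monoid N] [FunLike F M N] [MonoidHomClass F M N]

def map (f : F) : Associates M → Associates N :=
  Quotient.map f fun _ _ => Associated.map f

@[simp]
theorem map_mk (f : F) (a : M) : map f (Associates.mk a) = Associates.mk (f a) :=
  rfl

theorem finite_mk_image_image (f : F) {S : Set M} (hS : (Associates.mk '' S).Finite) :
    (Associates.mk '' (f '' S)).Finite := by
  rw [Set.image_image]
  simpa only [Set.image_image, map_mk] using hS.image (map f)

theorem finite_mk_image_of_finite_mk_image_image (f : F) {S : Set M}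
    (hS : (Associates.mk '' (f '' S)).Finite)
    (hf : ∀ p ∈ S, ∀ q ∈ S, Associated (f p) (f q) → Associated p q) :
    (Associates.mk '' S).Finite := by
  refine Set.Finite.of_finite_image (f := map f) ?_ ?_
  · simpa only [Set.image_image, map_mk] using hS
  · rintro _ ⟨p, hp, rfl⟩ _ ⟨q, hq, rfl⟩ hpq
    rw [map_mk, map_mk, mk_eq_mk_iff_associated] at hpq
    exact mk_eq_mk_iff_associated.mpr (hf p hp q hq hpq)

end Associates

theorem UniqueFactorizationMonoid.finite_associates_mk_dvd {α : Type*} [CommMonoidWithZero α]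
    [UniqueFactorizationMonoid α] {a : α} (ha : a ≠ 0) :
    (Associates.mk '' {d | d ∣ a}).Finite := by
  have : Fintype {x // x ∣ Associates.mk a} :=
    fintypeSubtypeDvd _ (Associates.mk_ne_zero.mpr ha)
  refine (Set.finite_coe_iff.mp (Finite.of_fintype {x // x ∣ Associates.mk a})).subset ?_
  rintro _ ⟨d, hd, rfl⟩
  exact Associates.mk_dvd_mk.mpr hd

namespace Polynomial

theorem IsPrimitive.associated_of_associated_map {R K : Type*} [CommRing R] [IsDomain R]
    [IsGCDMonoid R] [Field K] [Algebra R K] [IsFractionRing R K] {p q : R[X]}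
    (hp : p.IsPrimitive) (hq : q.IsPrimitive)
    (h : Associated (p.map (algebraMap R K)) (q.map (algebraMap R K))) : Associated p q :=
  associated_of_dvd_dvd (hp.dvd_of_fraction_map_dvd_fraction_map h.dvd)
    (hq.dvd_of_fraction_map_dvd_fraction_map h.symm.dvd)

variable {R : Type*} [CommRing R]

theorem finite_associates_irreducible_dvd_of_natDegree_eq_zero (hR : IsIDFDomain R)
    {f : R[X]} (hf : f ≠ 0) :
    (Associates.mk '' {p : R[X] | Irreducible p ∧ p ∣ f ∧ p.natDegree = 0}).Finite := by
  refine (Associates.finite_mk_image_image C (hR _ (leadingCoeff_ne_zero.mpr hf))).subset ?_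
  rintro _ ⟨p, ⟨hirr, hdvd, hdeg⟩, rfl⟩
  rw [eq_C_of_natDegree_eq_zero hdeg] at hirr hdvd ⊢
  exact ⟨_, ⟨_, ⟨hirr.of_map, (C_dvd_iff_dvd_coeff _ _).mp hdvd _⟩, rfl⟩, rfl⟩

theorem finite_associates_irreducible_dvd_of_natDegree_ne_zero [IsDomain R] [IsGCDMonoid R]
    {f : R[X]} (hf : f ≠ 0) :
    (Associates.mk '' {p : R[X] | Irreducible p ∧ p ∣ f ∧ p.natDegree ≠ 0}).Finite := by
  let φ := mapRingHom (algebraMap R (FractionRing R))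
  refine Associates.finite_mk_image_of_finite_mk_image_image φ ?_ ?_
  · refine (UniqueFactorizationMonoid.finite_associates_mk_dvd (a := φ f)
      ((Polynomial.map_ne_zero_iff (IsFractionRing.injective R _)).mpr hf)).subset ?_
    exact Set.image_mono (Set.image_subset_iff.mpr fun _ hp => _root_.map_dvd φ hp.2.1)
  · rintro p ⟨hp, -, hpdeg⟩ q ⟨hq, -, hqdeg⟩
    exact (hp.isPrimitive hpdeg).associated_of_associated_map (hq.isPrimitive hqdeg)

end Polynomial

/-- If `D` is a GCD domain that is also an IDF domain, then the polynomial ring `D[X]`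
is an IDF domain. -/
theorem polynomial_isIDF_of_gcd_and_isIDF (D : Type*) [CommRing D] [IsDomain D]
    [GCDMonoid D] (hIDF : IsIDFDomain D) :
    IsIDFDomain (Polynomial D) := by
  intro f hf
  have hsplit : {p : D[X] | Irreducible p ∧ p ∣ f} =
      {p | Irreducible p ∧ p ∣ f ∧ p.natDegree = 0} ∪
        {p | Irreducible p ∧ p ∣ f ∧ p.natDegree ≠ 0} := by
    ext p
    simp only [Set.mem_union, Set.mem_ofPred_eq]
    tauto
  rw [hsplit, Set.image_union]
  exact (finite_associates_irreducible_dvd_of_natDegree_eq_zero hIDF hf).union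
    (finite_associates_irreducible_dvd_of_natDegree_ne_zero hf)
end

section
/- The additive monoid C = {x ∈ ℚ : 1 ≤ x} ∪ {0} (a submonoid of (ℚ, +)) is not MCD-finite: there exists a finite subset of its nonzero elements having infinitely many maximal common divisors (which here are automatically pairwise non-associate since C has no nontrivial units). -/
/-! For `1 < c ≤ 2` the element `c` divides `3` and `7/2` in `C`, since the differences are
`≥ 1`. A strictly larger common multiple `d` of `c` would satisfy `d ≥ c + 1 > 2`, and a divisor
of `3` exceeding `2` is `3` itself, which does not divide `7/2` (the difference is `1/2`). So
every rational in `(1, 2]` is a maximal common divisor of `{3, 7/2}`, and `C` has no nontrivial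
units because all its elements are nonnegative. -/

/-- Divisibility in an additively-written commutative monoid: `a` divides `b` if
`b = a + c` for some `c`. -/
def AddDvd {M : Type*} [AddCommMonoid M] (a b : M) : Prop :=
  ∃ c : M, b = a + c

/-- Two elements of an additively-written commutative monoid are associates if they
differ by an additive unit of the monoid. -/
def AddAssociated {M : Type*} [AddCommMonoid M] (a b : M) : Prop :=
  ∃ u : AddUnits M, a + u = b

/-- `c` is a *maximal common divisor* (MCD) of the set `T` in an additively-written
commutative monoid. -/
def IsAddMCD {M : Type*} [AddCommMonoid M] (T : Set M) (c : M) : Prop :=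
  (∀ t ∈ T, AddDvd c t) ∧ ∀ d : M, (∀ t ∈ T, AddDvd d t) → AddDvd c d → AddAssociated c d

/-- An additively-written commutative monoid is *MCD-finite* if every finite subset of
its nonzero (i.e. non-identity) elements has only finitely many maximal common divisors
up to associates. -/
def AddMCDFinite (M : Type*) [AddCommMonoid M] : Prop :=
  ∀ T : Set M, T.Finite → (∀ t ∈ T, t ≠ 0) →
    ∃ F : Set M, F.Finite ∧ ∀ c : M, IsAddMCD T c → ∃ f ∈ F, AddAssociated c f

/-- The additive submonoid `C = {x ∈ ℚ : 1 ≤ x} ∪ {0}` of `(ℚ, +)`. -/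
def ratGEOneMonoid : AddSubmonoid ℚ where
  carrier := {x : ℚ | 1 ≤ x} ∪ {0}
  zero_mem' := Or.inr rfl
  add_mem' := by
    rintro a b (ha | ha) (hb | hb)
    · exact Or.inl (by simp only [Set.mem_setOf_eq] at *; linarith)
    · rw [Set.mem_singleton_iff] at hb; subst hb; rw [add_zero]; exact Or.inl ha
    · rw [Set.mem_singleton_iff] at ha; subst ha; rw [zero_add]; exact Or.inl hb
    · rw [Set.mem_singleton_iff] at ha hb; subst ha; subst hb
      exact Or.inr (by simp)

section TrivialUnits

variable {M : Type*} [AddCommMonoid M] [Subsingleton (AddUnits M)]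

theorem addAssociated_iff_eq {a b : M} : AddAssociated a b ↔ a = b := by
  constructor
  · rintro ⟨u, rfl⟩
    rw [Subsingleton.elim u 0, AddUnits.val_zero, add_zero]
  · rintro rfl
    exact ⟨0, add_zero a⟩

theorem isAddMCD_of_forall_eq {T : Set M} {c : M} (hc : ∀ t ∈ T, AddDvd c t)
    (hmax : ∀ d : M, (∀ t ∈ T, AddDvd d t) → AddDvd c d → c = d) : IsAddMCD T c :=
  ⟨hc, fun d hd hcd => addAssociated_iff_eq.mpr (hmax d hd hcd)⟩

theorem not_addMCDFinite_of_infinite_isAddMCD {T : Set M} (hT : T.Finite)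
    (hT0 : ∀ t ∈ T, t ≠ 0) (hinf : {c : M | IsAddMCD T c}.Infinite) :
    ¬ AddMCDFinite M := by
  intro h
  obtain ⟨F, hF, hMCD⟩ := h T hT hT0
  refine hinf (hF.subset fun c hc => ?_)
  obtain ⟨f, hfF, hcf⟩ := hMCD c hc
  rwa [addAssociated_iff_eq.mp hcf]

end TrivialUnits

namespace ratGEOneMonoid

local notation "C" => ratGEOneMonoid

theorem mem_iff {x : ℚ} : x ∈ C ↔ x = 0 ∨ 1 ≤ x :=
  or_comm

theorem coe_nonneg (a : C) : 0 ≤ (a : ℚ) := by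
  rcases mem_iff.mp a.2 with h | h <;> linarith

theorem eq_zero_of_add_eq_zero {a b : C} (h : a + b = 0) : a = 0 := by
  have hab : (a : ℚ) + b = 0 := congrArg Subtype.val h
  exact Subtype.ext (show (a : ℚ) = 0 by linarith [coe_nonneg a, coe_nonneg b])

instance : Subsingleton (AddUnits C) :=
  ⟨fun u v => AddUnits.ext <|
    (eq_zero_of_add_eq_zero u.add_neg).trans (eq_zero_of_add_eq_zero v.add_neg).symm⟩

theorem addDvd_iff {a b : C} : AddDvd a b ↔ (b : ℚ) = a ∨ (a : ℚ) + 1 ≤ b := by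
  constructor
  · rintro ⟨c, rfl⟩
    rcases mem_iff.mp c.2 with hc | hc
    · left; simp [hc]
    · right; simp only [AddSubmonoid.coe_add]; linarith
  · intro h
    have hmem : (b : ℚ) - a ∈ C := mem_iff.mpr (h.imp (fun hab => by rw [hab, sub_self])
      (fun hab => by linarith))
    exact ⟨⟨(b : ℚ) - a, hmem⟩, Subtype.ext (by simp)⟩

def threeSevenHalves : Set C := ((↑) : C → ℚ) ⁻¹' {3, 7 / 2}

theorem threeSevenHalves_finite : threeSevenHalves.Finite :=
  (Set.toFinite _).preimage Subtype.val_injective.injOn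

theorem ne_zero_of_mem_threeSevenHalves {t : C} (ht : t ∈ threeSevenHalves) : t ≠ 0 := by
  rintro rfl
  rcases ht with h | h <;> norm_num at h

theorem isAddMCD_threeSevenHalves {c : C} (h1 : 1 < (c : ℚ)) (h2 : (c : ℚ) ≤ 2) :
    IsAddMCD threeSevenHalves c := by
  refine isAddMCD_of_forall_eq (fun t ht => addDvd_iff.mpr (Or.inr ?_)) fun d hd hcd => ?_
  · rcases ht with h | h <;> rw [Set.mem_singleton_iff.mp h] <;> linarith
  · have h3 := addDvd_iff.mp <|
      hd ⟨3, mem_iff.mpr (by norm_num)⟩ (by simp [threeSevenHalves])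
    have h7 := addDvd_iff.mp <|
      hd ⟨7 / 2, mem_iff.mpr (by norm_num)⟩ (by simp [threeSevenHalves])
    rcases addDvd_iff.mp hcd with h | h
    · exact Subtype.ext h.symm
    · rcases h3 with h3 | h3 <;> rcases h7 with h7 | h7 <;> linarith

theorem infinite_isAddMCD_threeSevenHalves : {c : C | IsAddMCD threeSevenHalves c}.Infinite := by
  have hsub : Set.Ioc (1 : ℚ) 2 ⊆ Set.range ((↑) : C → ℚ) := fun x hx => by
    rw [Subtype.range_coe]
    exact mem_iff.mpr (Or.inr hx.1.le)
  refine Set.Infinite.mono (s := ((↑) : C → ℚ) ⁻¹' Set.Ioc 1 2)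
    (fun c hc => isAddMCD_threeSevenHalves hc.1 hc.2) (Set.Infinite.of_image ((↑) : C → ℚ) ?_)
  rw [Set.image_preimage_eq_of_subset hsub]
  exact Set.Ioc_infinite (by norm_num)

end ratGEOneMonoid

/-- The additive monoid `C = {x ∈ ℚ : 1 ≤ x} ∪ {0}` has no nontrivial units (so
associates coincide with equality), and it is not MCD-finite: there is a finite subset
of its nonzero elements having infinitely many maximal common divisors. -/
theorem ratGEOneMonoid_not_addMCDFinite :
    (∀ a b : ratGEOneMonoid, AddAssociated a b → a = b) ∧
    (∃ T : Set ratGEOneMonoid, T.Finite ∧ (∀ t ∈ T, t ≠ 0) ∧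
      {c : ratGEOneMonoid | IsAddMCD T c}.Infinite) ∧
    ¬ AddMCDFinite ratGEOneMonoid := by
  have hT := ratGEOneMonoid.threeSevenHalves_finite
  have hT0 : ∀ t ∈ ratGEOneMonoid.threeSevenHalves, t ≠ 0 :=
    fun _ => ratGEOneMonoid.ne_zero_of_mem_threeSevenHalves
  have hinf := ratGEOneMonoid.infinite_isAddMCD_threeSevenHalves
  exact ⟨fun _ _ => addAssociated_iff_eq.mp, ⟨_, hT, hT0, hinf⟩,
    not_addMCDFinite_of_infinite_isAddMCD hT hT0 hinf⟩
end

section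
/- Let S be a commutative cancellative torsion-free reduced monoid and suppose there exist s, t ∈ S such that the set of maximal common divisors of {s, t} contains two distinct (hence non-associate) elements b and d. Then the direct product monoid T = ∏_{i ∈ ℕ} S is cancellative, torsion-free, and reduced, but T is not MCD-finite: the elements s' and t' of T all of whose components equal s (respectively t) have infinitely many pairwise distinct maximal common divisors, namely the elements c_i having b in the i-th place and d in all other places. -/
/-!
Maximal common divisors in `∏ i, M i` are computed componentwise, since divisibility and
association are. Hence, choosing in every coordinate one of the two maximal common divisors
`b ≠ d` of `{s, t}` gives a maximal common divisor of the constant tuples, and putting `b`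
in exactly one coordinate already yields infinitely many distinct ones. In a reduced monoid
associates are equal, so these cannot be covered by finitely many associate classes.
-/

section Reduced

variable {M : Type*} [AddCommMonoid M]

theorem subsingleton_addUnits_of_reduced (hred : ∀ a b : M, a + b = 0 → a = 0 ∧ b = 0) :
    Subsingleton (AddUnits M) :=
  .addUnits_of_isAddUnit fun a ha ↦
    let ⟨b, hab⟩ := ha.exists_neg
    (hred a b hab).1

variable [Subsingleton (AddUnits M)]

theorem AddAssociated.eq {a c : M} (h : AddAssociated a c) : a = c := by
  obtain ⟨u, rfl⟩ := h
  rw [u.eq_zero, AddUnits.val_zero, add_zero]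

theorem IsAddMCD.eq_zero_of_zero_mem {T : Set M} {c : M} (h : IsAddMCD T c) (hT : 0 ∈ T) :
    c = 0 := by
  obtain ⟨e, he⟩ := h.1 0 hT
  exact (add_eq_zero.1 he.symm).1

theorem not_addMCDFinite_of_infinite_setOf_isAddMCD {T : Set M} (hT : T.Finite)
    (hinf : {c | IsAddMCD T c}.Infinite) : ¬ AddMCDFinite M := by
  intro hfin
  have hT0 : ∀ t ∈ T, t ≠ 0 := by
    rintro _ ht rfl
    exact hinf ((Set.finite_singleton 0).subset fun c hc ↦ hc.eq_zero_of_zero_mem ht)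
  obtain ⟨F, hF, hcover⟩ := hfin T hT hT0
  refine hinf (hF.subset fun c hc ↦ ?_)
  obtain ⟨f, hf, hcf⟩ := hcover c hc
  rwa [hcf.eq]

end Reduced

section Pi

variable {ι : Type*} {M : ι → Type*} [∀ i, AddCommMonoid (M i)]

theorem addDvd_pi_iff {x y : ∀ i, M i} : AddDvd x y ↔ ∀ i, AddDvd (x i) (y i) := by
  refine ⟨fun ⟨z, hz⟩ i ↦ ⟨z i, congrFun hz i⟩, fun h ↦ ?_⟩
  choose z hz using h
  exact ⟨z, funext hz⟩

theorem AddAssociated.pi {x y : ∀ i, M i} (h : ∀ i, AddAssociated (x i) (y i)) :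
    AddAssociated x y := by
  choose u hu using h
  exact ⟨AddEquiv.piAddUnits.symm u, funext hu⟩

theorem IsAddMCD.pi_pair {f g c : ∀ i, M i} (h : ∀ i, IsAddMCD {f i, g i} (c i)) :
    IsAddMCD {f, g} c := by
  refine ⟨?_, fun e he hce ↦ AddAssociated.pi fun i ↦ (h i).2 (e i) ?_ (addDvd_pi_iff.1 hce i)⟩
  · rintro x (rfl | rfl) <;> exact addDvd_pi_iff.2 fun i ↦ (h i).1 _ (by simp)
  · rintro x (rfl | rfl) <;> exact addDvd_pi_iff.1 (he _ (by simp)) i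

end Pi

theorem injective_ite_eq {ι α : Type*} [DecidableEq ι] {b d : α} (hbd : b ≠ d) :
    Function.Injective fun i : ι ↦ (fun j ↦ if j = i then b else d : ι → α) := by
  intro i i' h
  by_contra hne
  exact hbd (by simpa [hne] using congrFun h i)

/-- Let `S` be a commutative cancellative torsion-free reduced (additive) monoid in
which some pair `{s, t}` has two distinct maximal common divisors `b` and `d`. Then the
direct product `T = ∏_{i ∈ ℕ} S` is cancellative, torsion-free and reduced, and the
constant tuples `s'`, `t'` (with all components `s`, resp. `t`) admit the infinitely
many pairwise distinct maximal common divisors `c i` (having `b` in the `i`-th place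
and `d` elsewhere); in particular `T` is not MCD-finite. -/
theorem pi_monoid_not_addMCDFinite (S : Type*) [AddCancelCommMonoid S]
    (htf : ∀ n : ℕ, n ≠ 0 → ∀ a b : S, n • a = n • b → a = b)
    (hred : ∀ a b : S, a + b = 0 → a = 0 ∧ b = 0)
    (s t b d : S)
    (hb : IsAddMCD ({s, t} : Set S) b) (hd : IsAddMCD ({s, t} : Set S) d)
    (hbd : b ≠ d) :
    (∀ x y z : ℕ → S, x + y = x + z → y = z) ∧
    (∀ n : ℕ, n ≠ 0 → ∀ x y : ℕ → S, n • x = n • y → x = y) ∧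
    (∀ x y : ℕ → S, x + y = 0 → x = 0 ∧ y = 0) ∧
    (∀ i : ℕ, IsAddMCD ({fun _ => s, fun _ => t} : Set (ℕ → S))
      (fun j => if j = i then b else d)) ∧
    Function.Injective (fun i : ℕ => (fun j => if j = i then b else d : ℕ → S)) ∧
    ¬ AddMCDFinite (ℕ → S) := by
  have := subsingleton_addUnits_of_reduced hred
  have hMCD : ∀ i : ℕ, IsAddMCD ({fun _ => s, fun _ => t} : Set (ℕ → S))
      (fun j => if j = i then b else d) :=
    fun i ↦ IsAddMCD.pi_pair fun j ↦ by split_ifs <;> assumption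
  have hinj := injective_ite_eq (ι := ℕ) hbd
  refine ⟨fun x y z h ↦ add_left_cancel h,
    fun n hn x y h ↦ funext fun j ↦ htf n hn (x j) (y j) (congrFun h j),
    fun x y h ↦ add_eq_zero.1 h, hMCD, hinj, ?_⟩
  exact not_addMCDFinite_of_infinite_setOf_isAddMCD (Set.toFinite _)
    ((Set.infinite_range_of_injective hinj).mono (Set.range_subset_iff.2 hMCD))
end

section
/- Let D be an integral domain and let S be a torsion-free cancellative commutative monoid that is not MCD-finite. Then the monoid ring R = D[X; S] is an integral domain that is not MCD-finite. -/
/-!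
A torsion-free cancellative commutative monoid embeds into a `ℚ`-vector space (the divisible
hull of its Grothendieck group) and therefore has unique sums. Hence `D[X; S]` is a domain in
which every factor of a monomial is a monomial. So `c ↦ X^c` matches divisibility, associates
and maximal common divisors of a nonempty finite `T ⊆ S` with those of `{X^t | t ∈ T}`, and
infinitely many pairwise non-associate MCDs of `T` in `S` stay pairwise non-associate MCDs in
`D[X; S]`.
-/

open Finset

open Algebra in
theorem TwoUniqueSums.of_isAddTorsionFree (M : Type*) [AddCancelCommMonoid M]
    [IsAddTorsionFree M] : TwoUniqueSums M :=
  .of_injective_addHom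
    ((DivisibleHull.coeAddMonoidHom _).comp GrothendieckAddGroup.of).toAddHom
    (DivisibleHull.coe_injective.comp GrothendieckAddGroup.of_injective) inferInstance

theorem addAssociated_zero_of_isAddMCD_empty {M : Type*} [AddCancelCommMonoid M] {c : M}
    (hc : IsAddMCD ∅ c) : AddAssociated c 0 := by
  obtain ⟨u, hu⟩ := hc.2 (c + c) (by simp) ⟨c, rfl⟩
  obtain rfl := add_left_cancel hu
  exact ⟨-u, u.add_neg⟩

namespace AddMonoidAlgebra

variable {R A : Type*}

theorem card_support_coeff_eq_one [Semiring R] {f : R[A]} :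
    #f.coeff.support = 1 ↔ ∃ a, ∃ r ≠ 0, f = single a r := by
  simp only [Finsupp.card_support_eq_one', ← coeff_inj, coeff_single]

theorem isUnit_single_one [CommSemiring R] [AddCommMonoid A] (u : AddUnits A) :
    IsUnit (single (u : A) (1 : R)) :=
  IsUnit.of_mul_eq_one (single ↑(-u) 1) (by simp [single_mul_single, one_def])

section TwoUniqueSums

variable [Semiring R] [NoZeroDivisors R]

theorem one_lt_card_support_coeff_mul [Add A] [TwoUniqueSums A] {f g : R[A]}
    (h : 1 < #f.coeff.support * #g.coeff.support) : 1 < #(f * g).coeff.support := by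
  obtain ⟨p, hp, q, hq, hpq, hpu, hqu⟩ := TwoUniqueSums.uniqueAdd_of_one_lt_card h
  rw [mem_product] at hp hq
  have mem_support {r : A × A} (hr : r.1 ∈ f.coeff.support ∧ r.2 ∈ g.coeff.support)
      (hru : UniqueAdd f.coeff.support g.coeff.support r.1 r.2) :
      r.1 + r.2 ∈ (f * g).coeff.support := by
    rw [Finsupp.mem_support_iff, coeff_mul_add_of_uniqueAdd hru]
    exact mul_ne_zero (Finsupp.mem_support_iff.mp hr.1) (Finsupp.mem_support_iff.mp hr.2)
  refine one_lt_card.mpr ⟨_, mem_support hp hpu, _, mem_support hq hqu, fun he => hpq ?_⟩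
  obtain ⟨h1, h2⟩ := hpu hq.1 hq.2 he.symm
  exact (Prod.ext h1 h2).symm

theorem exists_single_of_mul_eq_single [Add A] [TwoUniqueSums A] {f g : R[A]} {t : A} {u : R}
    (hu : u ≠ 0) (h : f * g = single t u) :
    (∃ a, ∃ r ≠ 0, f = single a r) ∧ ∃ b, ∃ s ≠ 0, g = single b s := by
  have hfg : #(f * g).coeff.support = 1 := card_support_coeff_eq_one.mpr ⟨t, u, hu, h⟩
  obtain ⟨hf, hg⟩ := ne_zero_and_ne_zero_of_mul (h ▸ single_ne_zero.mpr hu)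
  have hcard : #f.coeff.support * #g.coeff.support = 1 := by
    refine le_antisymm (not_lt.mp fun hlt => (one_lt_card_support_coeff_mul hlt).ne' hfg) ?_
    simpa [Nat.one_le_iff_ne_zero] using ⟨hf, hg⟩
  simpa only [card_support_coeff_eq_one] using mul_eq_one.mp hcard

theorem dvd_single_iff [AddCommMonoid A] [TwoUniqueSums A] {d : R[A]} {t : A} {u : R}
    (hu : u ≠ 0) : d ∣ single t u ↔ ∃ s v, d = single s v ∧ AddDvd s t ∧ v ∣ u := by
  constructor
  · rintro ⟨e, he⟩
    obtain ⟨⟨s, v, -, rfl⟩, s', v', -, rfl⟩ := exists_single_of_mul_eq_single hu he.symm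
    rw [single_mul_single, single_inj] at he
    obtain ⟨rfl, rfl⟩ := he.resolve_right fun h => hu h.1
    exact ⟨s, v, rfl, ⟨s', rfl⟩, ⟨v', rfl⟩⟩
  · rintro ⟨s, v, rfl, ⟨s', rfl⟩, ⟨v', rfl⟩⟩
    exact ⟨single s' v', (single_mul_single ..).symm⟩

end TwoUniqueSums

section Associated

variable [CommSemiring R] [NoZeroDivisors R] [Nontrivial R]
  [AddCancelCommMonoid A] [TwoUniqueSums A]

theorem single_one_dvd_single_one_iff {s t : A} :
    single s (1 : R) ∣ single t 1 ↔ AddDvd s t := by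
  rw [dvd_single_iff one_ne_zero]
  constructor
  · rintro ⟨s', v, h, hst, -⟩
    rw [single_inj] at h
    obtain ⟨rfl, -⟩ := h.resolve_right fun h => one_ne_zero h.1
    exact hst
  · exact fun hst => ⟨s, 1, rfl, hst, one_dvd 1⟩

theorem exists_associated_single_one_of_dvd {d : R[A]} {t : A} (hd : d ∣ single t 1) :
    ∃ s, Associated (single s 1) d := by
  obtain ⟨s, v, rfl, -, hv⟩ := (dvd_single_iff one_ne_zero).mp hd
  refine ⟨s, ((isUnit_of_dvd_one hv).map (singleZeroRingHom (M := A))).unit, ?_⟩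
  simp [single_mul_single]

theorem associated_single_one_iff {s t : A} :
    Associated (single s (1 : R)) (single t 1) ↔ AddAssociated s t := by
  constructor
  · intro h
    obtain ⟨e, rfl⟩ := single_one_dvd_single_one_iff.mp h.dvd
    obtain ⟨e', he'⟩ := single_one_dvd_single_one_iff.mp h.symm.dvd
    have hee' : e + e' = 0 := add_left_cancel (by rw [← add_assoc, ← he', add_zero])
    exact ⟨⟨e, e', hee', by rw [add_comm, hee']⟩, rfl⟩
  · rintro ⟨u, rfl⟩
    exact ⟨(isUnit_single_one u).unit, by simp [single_mul_single]⟩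

theorem isMCD_image_single_one {T : Set A} (hT : T.Nonempty) {c : A} (hc : IsAddMCD T c) :
    IsMCD ((single · (1 : R)) '' T) (single c 1) := by
  refine ⟨?_, fun d hd hcd => ?_⟩
  · rintro _ ⟨t, ht, rfl⟩
    exact single_one_dvd_single_one_iff.mpr (hc.1 t ht)
  · obtain ⟨t₀, ht₀⟩ := hT
    obtain ⟨s, hs⟩ := exists_associated_single_one_of_dvd (hd _ ⟨t₀, ht₀, rfl⟩)
    have hsT : ∀ t ∈ T, AddDvd s t := fun t ht =>
      single_one_dvd_single_one_iff.mp (hs.dvd.trans (hd _ ⟨t, ht, rfl⟩))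
    have hcs : AddDvd c s := single_one_dvd_single_one_iff.mp (hcd.trans hs.symm.dvd)
    exact (associated_single_one_iff.mpr (hc.2 s hsT hcs)).trans hs

theorem addMCDFinite_of_mcdFinite (h : MCDFinite R[A]) : AddMCDFinite A := by
  intro T hT _
  rcases T.eq_empty_or_nonempty with rfl | hne
  · exact ⟨{0}, Set.finite_singleton 0,
      fun c hc => ⟨0, rfl, addAssociated_zero_of_isAddMCD_empty hc⟩⟩
  set cls : A → Associates R[A] := fun c => Associates.mk (single c 1)
  have hfin : (cls '' {c | IsAddMCD T c}).Finite := by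
    refine (h ((single · (1 : R)) '' T) (hT.image _) ?_).subset ?_
    · rintro _ ⟨t, -, rfl⟩
      exact single_ne_zero.mpr one_ne_zero
    · rintro _ ⟨c, hc, rfl⟩
      exact ⟨_, isMCD_image_single_one hne hc, rfl⟩
  obtain ⟨F, -, hFfin, hFeq⟩ := Set.exists_subset_image_finite_and
    (p := fun U => U = cls '' {c | IsAddMCD T c}) |>.mp ⟨_, subset_rfl, hfin, rfl⟩
  refine ⟨F, hFfin, fun c hc => ?_⟩
  obtain ⟨f, hf, hfc⟩ : cls c ∈ cls '' F := hFeq ▸ ⟨c, hc, rfl⟩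
  exact ⟨f, hf, associated_single_one_iff.mp (Associates.mk_eq_mk_iff_associated.mp hfc).symm⟩

end Associated

end AddMonoidAlgebra

/-- Let `D` be an integral domain and `S` a torsion-free cancellative commutative
(additive) monoid that is not MCD-finite. Then the monoid ring `D[X; S]` is an
integral domain that is not MCD-finite. -/
theorem addMonoidAlgebra_not_mcdFinite (D : Type*) [CommRing D] [IsDomain D]
    (S : Type*) [AddCancelCommMonoid S]
    (htf : ∀ n : ℕ, n ≠ 0 → ∀ a b : S, n • a = n • b → a = b)
    (hS : ¬ AddMCDFinite S) :
    IsDomain (AddMonoidAlgebra D S) ∧ ¬ MCDFinite (AddMonoidAlgebra D S) := by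
  have : IsAddTorsionFree S := ⟨fun n hn a b => htf n hn a b⟩
  have := TwoUniqueSums.of_isAddTorsionFree S
  exact ⟨inferInstance, fun h => hS (AddMonoidAlgebra.addMCDFinite_of_mcdFinite h)⟩
end

section
/- Let T be an integral domain of the form T = K + M, where K is a subfield of T, M is a nonzero maximal ideal of T, and every element of T is uniquely the sum of an element of K and an element of M. Let D be a subfield of K and let R be the subring D + M of T. Suppose M contains an irreducible element of T. If R is MCD-finite, then the quotient group K*/D* is finite and T is MCD-finite. -/
/-- The subring `D + M` of `T`, for a subring `D` and an ideal `M` of `T`. -/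
def dPlusM {T : Type*} [CommRing T] (D : Subring T) (M : Ideal T) : Subring T where
  carrier := {x : T | ∃ d ∈ D, ∃ m ∈ M, x = d + m}
  zero_mem' := ⟨0, D.zero_mem, 0, M.zero_mem, by ring⟩
  one_mem' := ⟨1, D.one_mem, 0, M.zero_mem, by ring⟩
  add_mem' := by
    rintro a b ⟨d1, hd1, m1, hm1, rfl⟩ ⟨d2, hd2, m2, hm2, rfl⟩
    exact ⟨d1 + d2, D.add_mem hd1 hd2, m1 + m2, M.add_mem hm1 hm2, by ring⟩
  neg_mem' := by
    rintro a ⟨d1, hd1, m1, hm1, rfl⟩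
    exact ⟨-d1, D.neg_mem hd1, -m1, M.neg_mem hm1, by ring⟩
  mul_mem' := by
    rintro a b ⟨d1, hd1, m1, hm1, rfl⟩ ⟨d2, hd2, m2, hm2, rfl⟩
    refine ⟨d1 * d2, D.mul_mem hd1 hd2, d1 * m2 + m1 * d2 + m1 * m2, ?_, by ring⟩
    exact M.add_mem (M.add_mem (M.mul_mem_left d1 hm2) (M.mul_mem_right d2 hm1))
      (M.mul_mem_left m1 hm2)

theorem mem_dPlusM_of_mem_ideal {T : Type*} [CommRing T] (D : Subring T) (M : Ideal T)
    {m : T} (hm : m ∈ M) : m ∈ dPlusM D M :=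
  ⟨0, D.zero_mem, m, hm, (zero_add m).symm⟩

theorem one_add_mem_dPlusM {T : Type*} [CommRing T] (D : Subring T) (M : Ideal T)
    {m : T} (hm : m ∈ M) (k : T) : 1 + k * m ∈ dPlusM D M :=
  ⟨1, D.one_mem, k * m, M.mul_mem_left k hm, rfl⟩

/-!
Since `T = K ⊕ M`, taking `K`-components is a ring retraction `p : T → K` with kernel `M`, and
`R = D + M = p⁻¹(D)`; a unit of `T` lying in `R` is a unit of `R`. Fix an atom
`m₀ ∈ M` of `T`.

If `α, β ∈ K*` lie in different cosets of `D*`, then every `k m₀` with `k ∈ K*` is an MCD in `R`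
of `m₀²(α + m₀)` and `m₀²(β + m₀)`, and `k m₀`, `k' m₀` are associated in `R` only when
`k' ∈ k D*`. So MCD-finiteness of `R` makes `K*/D*` finite.

With finitely many coset representatives `c`, every element of `T` is some `c r` with `r ∈ R`.
If `d` is an MCD in `T` of a finite set `S` and `t = d c_t r_t`, then `m₀ d` is an MCD in `R` of
`{m₀ c_t⁻¹ t : t ∈ S}`. There are finitely many choices of the `c_t`, and `m₀ d` determines `d`
up to associates, so `T` is MCD-finite.
-/

theorem exists_finite_subset_forall_exists_eq {α β : Type*} {X : Set α} (f : α → β)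
    (hf : (f '' X).Finite) : ∃ F ⊆ X, F.Finite ∧ ∀ x ∈ X, ∃ c ∈ F, f c = f x := by
  obtain ⟨F, hFX, hbij⟩ := Set.exists_subset_bijOn X f
  refine ⟨F, hFX, hf.of_injOn hbij.mapsTo hbij.injOn, fun x hx => ?_⟩
  exact hbij.surjOn (Set.mem_image_of_mem f hx)

theorem finite_associatesMk_image_of_finite_image {α β : Type*} [Monoid α] {X : Set α} (f : α → β)
    (hf : (f '' X).Finite) (hf_assoc : ∀ x ∈ X, ∀ y ∈ X, f x = f y → Associated x y) :
    (Associates.mk '' X).Finite := by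
  obtain ⟨F, hFX, hF, hrep⟩ := exists_finite_subset_forall_exists_eq f hf
  refine (hF.image Associates.mk).subset ?_
  rintro _ ⟨x, hx, rfl⟩
  obtain ⟨c, hc, hcx⟩ := hrep x hx
  exact ⟨c, hc, Associates.mk_eq_mk_iff_associated.2 (hf_assoc c (hFX hc) x hx hcx)⟩

theorem exists_retraction_ker_eq {T : Type*} [CommRing T] (K : Subring T) (M : Ideal T)
    (hsum : ∀ t : T, ∃ k ∈ K, ∃ m ∈ M, t = k + m) (hKM : ∀ x : T, x ∈ K → x ∈ M → x = 0) :
    ∃ p : T →+* T, (∀ x, p x ∈ K) ∧ (∀ x ∈ K, p x = x) ∧ RingHom.ker p = M := by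
  let f : K →+* T ⧸ M := (Ideal.Quotient.mk M).comp K.subtype
  have hf : Function.Bijective f := by
    refine ⟨(injective_iff_map_eq_zero f).2 fun x hx =>
      Subtype.ext (hKM x x.2 (Ideal.Quotient.eq_zero_iff_mem.1 hx)), fun q => ?_⟩
    obtain ⟨t, rfl⟩ := Ideal.Quotient.mk_surjective q
    obtain ⟨k, hk, m, hm, rfl⟩ := hsum t
    exact ⟨⟨k, hk⟩, Ideal.Quotient.eq.2 (by simpa using M.neg_mem hm)⟩
  let e := RingEquiv.ofBijective f hf
  refine ⟨K.subtype.comp (e.symm.toRingHom.comp (Ideal.Quotient.mk M)),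
    fun x => (e.symm _).2, fun x hx => ?_, ?_⟩
  · exact congrArg Subtype.val (e.symm_apply_apply ⟨x, hx⟩)
  · ext x
    simp [RingHom.mem_ker, Ideal.Quotient.eq_zero_iff_mem]

theorem add_ne_zero_of_mem_ker {T : Type*} [CommRing T] {K : Subring T} {p : T →+* T}
    (hpfix : ∀ x ∈ K, p x = x) {k m : T} (hk : k ∈ K) (hk0 : k ≠ 0)
    (hm : m ∈ RingHom.ker p) : k + m ≠ 0 := fun h =>
  hk0 (by simpa [hpfix k hk, RingHom.mem_ker.1 hm] using congrArg p h)

namespace dPlusM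

variable {T : Type*} [CommRing T] {K D : Subring T} {M : Ideal T} {p : T →+* T}

def idealMul (D : Subring T) {m : T} (hm : m ∈ M) (x : T) : dPlusM D M :=
  ⟨m * x, mem_dPlusM_of_mem_ideal D M (M.mul_mem_right x hm)⟩

@[simp]
theorem coe_idealMul {m : T} (hm : m ∈ M) (x : T) : (idealMul D hm x : T) = m * x := rfl

variable (hpK : ∀ x, p x ∈ K) (hpfix : ∀ x ∈ K, p x = x) (hDK : D ≤ K)
  (hD : ∀ x ∈ D, x ≠ 0 → ∃ y ∈ D, x * y = 1) (hK : ∀ x ∈ K, x ≠ 0 → ∃ y ∈ K, x * y = 1)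

include hpK hpfix hDK in
theorem mem_iff_apply_mem {x : T} : x ∈ dPlusM D (RingHom.ker p) ↔ p x ∈ D := by
  constructor
  · rintro ⟨d, hd, m, hm, rfl⟩
    rw [map_add, RingHom.mem_ker.1 hm, hpfix d (hDK hd), add_zero]
    exact hd
  · intro hx
    refine ⟨p x, hx, x - p x, ?_, by ring⟩
    rw [RingHom.mem_ker, map_sub, hpfix _ (hpK x), sub_self]

include hpK hpfix hDK hD in
theorem isUnit_of_isUnit_coe [Nontrivial T] {w : dPlusM D (RingHom.ker p)}
    (hw : IsUnit (w : T)) : IsUnit w := by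
  obtain ⟨y, hwy⟩ := hw.exists_right_inv
  have hpwy : p w * p y = 1 := by rw [← map_mul, hwy, map_one]
  have hpw : p w ∈ D := (mem_iff_apply_mem hpK hpfix hDK).1 w.2
  obtain ⟨z, hz, hwz⟩ := hD _ hpw (left_ne_zero_of_mul_eq_one hpwy)
  have hpy : p y = z := left_inv_eq_right_inv (by rw [mul_comm]; exact hpwy) hwz
  have hy : y ∈ dPlusM D (RingHom.ker p) := (mem_iff_apply_mem hpK hpfix hDK).2 (hpy ▸ hz)
  exact isUnit_iff_exists_inv.2 ⟨⟨y, hy⟩, Subtype.ext hwy⟩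

include hpK hpfix hDK hD in
theorem associated_of_eq_mul_of_isUnit_coe [Nontrivial T] {a e w : dPlusM D (RingHom.ker p)}
    (he : e = a * w) (hw : IsUnit (w : T)) : Associated a e :=
  he ▸ associated_mul_unit_right a w (isUnit_of_isUnit_coe hpK hpfix hDK hD hw)

include hpK hpfix hDK hK in
theorem exists_unit_inv_mul_mem [Nontrivial T] {F : Set T} (hFK : ∀ c ∈ F, c ∈ K ∧ c ≠ 0)
    (hF : ∀ k ∈ K, k ≠ 0 → ∃ c ∈ F, ∃ d ∈ D, k = c * d) (q : T) :
    ∃ u : Tˣ, (u : T) ∈ F ∧ ↑u⁻¹ * q ∈ dPlusM D (RingHom.ker p) := by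
  obtain ⟨c, hcF, d, hd, hqcd⟩ : ∃ c ∈ F, ∃ d ∈ D, p q = c * d := by
    by_cases hq : p q = 0
    · obtain ⟨c, hc, -⟩ := hF 1 K.one_mem one_ne_zero
      exact ⟨c, hc, 0, D.zero_mem, by rw [hq, mul_zero]⟩
    · exact hF _ (hpK q) hq
  obtain ⟨hc, hc0⟩ := hFK c hcF
  obtain ⟨c', hc', hcc'⟩ := hK c hc hc0
  refine ⟨Units.mkOfMulEqOne c c' hcc', hcF, (mem_iff_apply_mem hpK hpfix hDK).2 ?_⟩
  have hpcq : p (c' * q) = d := by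
    rw [map_mul, hpfix c' hc', hqcd, ← mul_assoc, mul_comm c' c, hcc', one_mul]
  exact hpcq ▸ hd

section

variable [IsDomain T]

include hpK hpfix hDK hD in
theorem isMCD_idealMul_of_isMCD {S : Set T} {d : T} (hd : IsMCD S d) {m₀ : T}
    (hm₀ : m₀ ∈ RingHom.ker p) (hm₀0 : m₀ ≠ 0) (σ : S → Tˣ)
    (hσ : ∀ t : S, ∃ r ∈ dPlusM D (RingHom.ker p), (t : T) = d * (σ t * r)) :
    IsMCD (Set.range fun t : S => idealMul D hm₀ (↑(σ t)⁻¹ * t)) (idealMul D hm₀ d) := by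
  refine ⟨?_, fun e he ⟨w, hw⟩ => ?_⟩
  · rintro _ ⟨t, rfl⟩
    obtain ⟨r, hr, ht⟩ := hσ t
    refine ⟨⟨r, hr⟩, Subtype.ext ?_⟩
    simp only [coe_idealMul, Subring.coe_mul]
    linear_combination (m₀ * ↑(σ t)⁻¹) * ht + (m₀ * d * r) * (σ t).inv_mul
  have hw' : (e : T) = m₀ * d * w := congrArg Subtype.val hw
  rcases eq_or_ne d 0 with rfl | hd0
  · obtain rfl : e = idealMul D hm₀ 0 := Subtype.ext (by simp [hw'])
    rfl
  have hdw : ∀ t ∈ S, d * w ∣ t := by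
    intro t ht
    obtain ⟨s, hs⟩ := he _ ⟨⟨t, ht⟩, rfl⟩
    have hs' : m₀ * (↑(σ ⟨t, ht⟩)⁻¹ * t) = e * s := congrArg Subtype.val hs
    have hts : ↑(σ ⟨t, ht⟩)⁻¹ * t = d * w * s :=
      mul_left_cancel₀ hm₀0 (by rw [hs', hw']; ring)
    refine ⟨s * σ ⟨t, ht⟩, ?_⟩
    linear_combination (σ ⟨t, ht⟩ : T) * hts - t * (σ ⟨t, ht⟩).mul_inv
  have hwu : IsUnit (w : T) :=
    isUnit_of_associated_mul (hd.2 _ hdw (dvd_mul_right d w)).symm hd0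
  exact associated_of_eq_mul_of_isUnit_coe hpK hpfix hDK hD hw hwu

include hpK hpfix hDK hD hK in
theorem isMCD_idealMul {m₀ : T} (hm₀ : m₀ ∈ RingHom.ker p) (hm₀irr : Irreducible m₀)
    {α β : T} (hα : α ∈ K) (hβ : β ∈ K) (hβ0 : β ≠ 0) (hαβ : ∀ d ∈ D, α ≠ β * d)
    {k : T} (hk : k ∈ K) (hk0 : k ≠ 0) :
    IsMCD {idealMul D hm₀ (m₀ * (α + m₀)), idealMul D hm₀ (m₀ * (β + m₀))}
      (idealMul D hm₀ k) := by
  have hm₀0 := hm₀irr.ne_zero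
  have hpm₀ := RingHom.mem_ker.1 hm₀
  obtain ⟨k', hk', hkk'⟩ := hK k hk hk0
  refine ⟨?_, fun e he ⟨w, hw⟩ => ?_⟩
  · have hdvd : ∀ x, idealMul D hm₀ k ∣ idealMul D hm₀ (m₀ * x) := fun x =>
      ⟨idealMul D hm₀ (k' * x), Subtype.ext (by
        simp only [coe_idealMul, Subring.coe_mul]; linear_combination (-(m₀ * m₀ * x)) * hkk')⟩
    rintro _ (rfl | rfl) <;> exact hdvd _
  obtain ⟨s₁, hs₁⟩ := he _ (Set.mem_insert _ _)
  obtain ⟨s₂, hs₂⟩ := he _ (Set.mem_insert_of_mem _ rfl)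
  have hw' : (e : T) = m₀ * k * w := congrArg Subtype.val hw
  have hs₁' : m₀ * (m₀ * (α + m₀)) = e * s₁ := congrArg Subtype.val hs₁
  have hs₂' : m₀ * (m₀ * (β + m₀)) = e * s₂ := congrArg Subtype.val hs₂
  -- Projecting `(α + m₀) s₂ = (β + m₀) s₁` to `K` puts `s₁, s₂` in `M`, as `α ∉ β D*`; then the
  -- atom `m₀ (α - β) = w · k (s₁ - s₂)` forces `w` to be a unit.
  have hps : α * p s₂ = β * p s₁ := by
    have h : (α + m₀) * s₂ = (β + m₀) * s₁ :=
      mul_left_cancel₀ (mul_ne_zero hm₀0 hm₀0) (by linear_combination s₂ * hs₁' - s₁ * hs₂')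
    simpa [hpm₀, hpfix α hα, hpfix β hβ] using congrArg p h
  have hps₂ : p s₂ = 0 := by
    by_contra h
    obtain ⟨z, hz, hs₂z⟩ := hD _ ((mem_iff_apply_mem hpK hpfix hDK).1 s₂.2) h
    exact hαβ (p s₁ * z) (D.mul_mem ((mem_iff_apply_mem hpK hpfix hDK).1 s₁.2) hz)
      (by linear_combination (-α) * hs₂z + z * hps)
  have hps₁ : p s₁ = 0 := by
    simpa [hps₂, hβ0] using hps.symm
  obtain ⟨i, -, hi⟩ := hK (α - β) (K.sub_mem hα hβ)
    (sub_ne_zero.2 fun h => hαβ 1 D.one_mem (by rw [h, mul_one]))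
  have hirr : Irreducible (m₀ * (α - β)) :=
    (irreducible_mul_isUnit (IsUnit.of_mul_eq_one _ hi)).2 hm₀irr
  have hfac : m₀ * (α - β) = w * (k * (s₁ - s₂)) :=
    mul_left_cancel₀ hm₀0 (by linear_combination hs₁' - hs₂' + (s₁ - s₂) * hw')
  have hnu : ¬IsUnit (k * (s₁ - s₂)) := fun h =>
    not_isUnit_zero (M₀ := T) (by simpa [hps₁, hps₂] using h.map p)
  exact associated_of_eq_mul_of_isUnit_coe hpK hpfix hDK hD hw
    ((hirr.isUnit_or_isUnit hfac).resolve_right hnu)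

include hpK hpfix hDK hD hK in
theorem exists_finite_cosetReps_of_mcdFinite {m₀ : T} (hm₀ : m₀ ∈ RingHom.ker p)
    (hm₀irr : Irreducible m₀) (hR : MCDFinite (dPlusM D (RingHom.ker p))) :
    ∃ F : Set T, F.Finite ∧ (∀ c ∈ F, c ∈ K ∧ c ≠ 0) ∧
      ∀ k ∈ K, k ≠ 0 → ∃ c ∈ F, ∃ d ∈ D, k = c * d := by
  by_cases h : ∃ α ∈ K, ∃ β ∈ K, β ≠ 0 ∧ ∀ d ∈ D, α ≠ β * d
  · obtain ⟨α, hα, β, hβ, hβ0, hαβ⟩ := h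
    have hα0 : α ≠ 0 := fun h0 => hαβ 0 D.zero_mem (by rw [h0, mul_zero])
    have hS : ∀ t ∈ ({idealMul D hm₀ (m₀ * (α + m₀)), idealMul D hm₀ (m₀ * (β + m₀))} :
        Set (dPlusM D (RingHom.ker p))), t ≠ 0 := by
      rintro _ (rfl | rfl) h0 <;> apply_fun Subtype.val at h0 <;>
        simp only [coe_idealMul, ZeroMemClass.coe_zero, mul_eq_zero, hm₀irr.ne_zero,
          false_or] at h0
      exacts [add_ne_zero_of_mem_ker hpfix hα hα0 hm₀ h0,
        add_ne_zero_of_mem_ker hpfix hβ hβ0 hm₀ h0]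
    obtain ⟨F, hFK, hF, hrep⟩ := exists_finite_subset_forall_exists_eq
      (X := {k | k ∈ K ∧ k ≠ 0}) (fun k => Associates.mk (idealMul D hm₀ k))
      ((hR _ (Set.toFinite _) hS).subset (by
        rintro _ ⟨k, ⟨hk, hk0⟩, rfl⟩
        exact ⟨_, isMCD_idealMul hpK hpfix hDK hD hK hm₀ hm₀irr hα hβ hβ0 hαβ hk hk0, rfl⟩))
    refine ⟨F, hF, hFK, fun k hk hk0 => ?_⟩
    obtain ⟨c, hcF, hck⟩ := hrep k ⟨hk, hk0⟩
    obtain ⟨hc, hc0⟩ := hFK hcF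
    obtain ⟨v, hv⟩ := Associates.mk_eq_mk_iff_associated.1 hck
    have hkv : k = c * v := mul_left_cancel₀ hm₀irr.ne_zero
      (by simpa [mul_assoc] using (congrArg Subtype.val hv).symm)
    obtain ⟨c', hc', hcc'⟩ := hK c hc hc0
    have hvK : ((v : dPlusM D (RingHom.ker p)) : T) ∈ K := by
      rw [show ((v : dPlusM D (RingHom.ker p)) : T) = c' * k by
        linear_combination (-(v : dPlusM D (RingHom.ker p)) : T) * hcc' - c' * hkv]
      exact K.mul_mem hc' hk
    refine ⟨c, hcF, v, ?_, hkv⟩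
    rw [← hpfix _ hvK]
    exact (mem_iff_apply_mem hpK hpfix hDK).1 (v : dPlusM D (RingHom.ker p)).2
  · push Not at h
    exact ⟨{1}, Set.finite_singleton 1, by simp [K.one_mem],
      fun k hk _ => ⟨1, rfl, h k hk 1 K.one_mem one_ne_zero⟩⟩

include hpK hpfix hDK hD hK in
theorem mcdFinite_of_mcdFinite_of_cosetReps {m₀ : T} (hm₀ : m₀ ∈ RingHom.ker p)
    (hm₀0 : m₀ ≠ 0) (hR : MCDFinite (dPlusM D (RingHom.ker p))) {F : Set T} (hF_fin : F.Finite)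
    (hFK : ∀ c ∈ F, c ∈ K ∧ c ≠ 0) (hF : ∀ k ∈ K, k ≠ 0 → ∃ c ∈ F, ∃ d ∈ D, k = c * d) :
    MCDFinite T := by
  intro S hS hS0
  let G : Set Tˣ := Units.val ⁻¹' F
  have : Finite S := hS.to_subtype
  have : Finite G := (hF_fin.preimage Units.val_injective.injOn).to_subtype
  let family : (S → G) → Set (dPlusM D (RingHom.ker p)) := fun σ =>
    Set.range fun t : S => idealMul D hm₀ (↑(σ t : Tˣ)⁻¹ * t)
  have hB : (⋃ σ, Associates.mk '' {c | IsMCD (family σ) c}).Finite := by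
    refine Set.finite_iUnion fun σ => hR _ (Set.finite_range _) ?_
    rintro _ ⟨t, rfl⟩ h0
    apply_fun Subtype.val at h0
    simp only [coe_idealMul, ZeroMemClass.coe_zero, mul_eq_zero, hm₀0, Units.ne_zero,
      false_or] at h0
    exact hS0 t t.2 h0
  refine finite_associatesMk_image_of_finite_image (fun d => Associates.mk (idealMul D hm₀ d))
    (hB.subset ?_) ?_
  · rintro _ ⟨d, hd, rfl⟩
    have : ∀ t : S, ∃ u : G, ∃ r ∈ dPlusM D (RingHom.ker p),
        (t : T) = d * ((u : Tˣ) * r) := by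
      intro t
      obtain ⟨q, hq⟩ := hd.1 t t.2
      obtain ⟨u, hu, hr⟩ := exists_unit_inv_mul_mem hpK hpfix hDK hK hFK hF q
      exact ⟨⟨u, hu⟩, _, hr, by rw [hq, Units.mul_inv_cancel_left]⟩
    choose σ hσ using this
    exact Set.mem_iUnion.2 ⟨σ, _,
      isMCD_idealMul_of_isMCD hpK hpfix hDK hD hd hm₀ hm₀0 (fun t => σ t) hσ, rfl⟩
  · intro x _ y _ hxy
    have h := (Associates.mk_eq_mk_iff_associated.1 hxy).map (dPlusM D (RingHom.ker p)).subtype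
    exact h.of_mul_left (Associated.refl m₀) hm₀0

end

end dPlusM

theorem quot_finite_and_mcdFinite_of_dPlusM_mcdFinite_general
    {T : Type*} [CommRing T] [IsDomain T]
    (K : Subring T) (hK : ∀ x ∈ K, x ≠ 0 → ∃ y ∈ K, x * y = 1)
    (M : Ideal T)
    (hsum : ∀ t : T, ∃ k ∈ K, ∃ m ∈ M, t = k + m)
    (hKM : ∀ x : T, x ∈ K → x ∈ M → x = 0)
    (D : Subring T) (hDK : D ≤ K) (hD : ∀ x ∈ D, x ≠ 0 → ∃ y ∈ D, x * y = 1)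
    (hatom : ∃ m ∈ M, Irreducible m)
    (hR : MCDFinite (dPlusM D M)) :
    (∃ F : Set T, F.Finite ∧ (∀ c ∈ F, c ∈ K ∧ c ≠ 0) ∧
      ∀ k ∈ K, k ≠ 0 → ∃ c ∈ F, ∃ d ∈ D, k = c * d) ∧
    MCDFinite T := by
  obtain ⟨p, hpK, hpfix, rfl⟩ := exists_retraction_ker_eq K M hsum hKM
  obtain ⟨m₀, hm₀, hm₀irr⟩ := hatom
  obtain ⟨F, hF_fin, hFK, hF⟩ :=
    dPlusM.exists_finite_cosetReps_of_mcdFinite hpK hpfix hDK hD hK hm₀ hm₀irr hR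
  exact ⟨⟨F, hF_fin, hFK, hF⟩, dPlusM.mcdFinite_of_mcdFinite_of_cosetReps hpK hpfix hDK hD hK
    hm₀ hm₀irr.ne_zero hR hF_fin hFK hF⟩

/-- D + M construction: `T = K + M` with `K` a subfield of `T`, `M` a nonzero maximal
ideal, every element of `T` uniquely a sum of an element of `K` and an element of `M`,
`D` a subfield of `K`, and `R = D + M`. If `M` contains an irreducible element of `T`
and `R` is MCD-finite, then the quotient group `K*/D*` is finite (there is a finite set
of coset representatives) and `T` is MCD-finite. -/
theorem quot_finite_and_mcdFinite_of_dPlusM_mcdFinite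
    {T : Type*} [CommRing T] [IsDomain T]
    (K : Subring T) (hK : ∀ x ∈ K, x ≠ 0 → ∃ y ∈ K, x * y = 1)
    (M : Ideal T) (hMmax : M.IsMaximal) (hMne : M ≠ ⊥)
    (hsum : ∀ t : T, ∃ k ∈ K, ∃ m ∈ M, t = k + m)
    (hKM : ∀ x : T, x ∈ K → x ∈ M → x = 0)
    (D : Subring T) (hDK : D ≤ K) (hD : ∀ x ∈ D, x ≠ 0 → ∃ y ∈ D, x * y = 1)
    (hatom : ∃ m ∈ M, Irreducible m)
    (hR : MCDFinite (dPlusM D M)) :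
    (∃ F : Set T, F.Finite ∧ (∀ c ∈ F, c ∈ K ∧ c ≠ 0) ∧
      ∀ k ∈ K, k ≠ 0 → ∃ c ∈ F, ∃ d ∈ D, k = c * d) ∧
    MCDFinite T :=
  quot_finite_and_mcdFinite_of_dPlusM_mcdFinite_general K hK M hsum hKM D hDK hD hatom hR
end

section
/- Let T be an integral domain of the form T = K + M, where K is a subfield of T, M is a nonzero maximal ideal of T, and every element of T is uniquely the sum of an element of K and an element of M. Let D be a subfield of K and let R be the subring D + M of T. Suppose that every element of M has, up to associates in T, only finitely many irreducible divisors lying in M. If T is MCD-finite and the quotient group K*/D* is finite, then R is MCD-finite. -/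
theorem isMCD_empty_iff {α : Type*} [CommMonoidWithZero α] {c : α} : IsMCD ∅ c ↔ c = 0 := by
  refine ⟨fun h => (associated_zero_iff_eq_zero c).mp (h.2 0 (by simp) (dvd_zero c)), ?_⟩
  rintro rfl
  exact ⟨by simp, fun d _ hd => by rw [zero_dvd_iff.mp hd]⟩

theorem isMCD_iff_forall_isUnit {α : Type*} [CommMonoidWithZero α] [IsCancelMulZero α]
    {S : Set α} {c : α} (hc : c ≠ 0) :
    IsMCD S c ↔ (∀ s ∈ S, c ∣ s) ∧ ∀ w, (∀ s ∈ S, c * w ∣ s) → IsUnit w := by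
  refine and_congr_right fun _ => ⟨fun h w hw => ?_, fun h d hd ⟨w, hw⟩ => ?_⟩
  · obtain ⟨u, hu⟩ := h _ hw (dvd_mul_right c w)
    exact mul_left_cancel₀ hc hu ▸ u.isUnit
  · subst hw
    exact associated_mul_unit_right c w (h w hd)

section DPlusM

variable {T : Type*} [CommRing T] {D : Subring T} {M : Ideal T}

theorem mem_dPlusM_iff {x : T} : x ∈ dPlusM D M ↔ ∃ d ∈ D, x - d ∈ M := by
  refine ⟨?_, fun ⟨d, hd, hx⟩ => ⟨d, hd, x - d, hx, by ring⟩⟩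
  rintro ⟨d, hd, m, hm, rfl⟩
  exact ⟨d, hd, by simpa using hm⟩

theorem mem_dPlusM_of_mul_mem (hD : ∀ x ∈ D, x ≠ 0 → ∃ y ∈ D, x * y = 1) {a x : T}
    (ha : a ∈ dPlusM D M) (haM : a ∉ M) (hax : a * x ∈ dPlusM D M) : x ∈ dPlusM D M := by
  obtain ⟨d, hd, had⟩ := mem_dPlusM_iff.mp ha
  obtain ⟨e, he, haxe⟩ := mem_dPlusM_iff.mp hax
  have hd0 : d ≠ 0 := by
    rintro rfl
    exact haM (by simpa using had)
  obtain ⟨d', hd', hdd'⟩ := hD d hd hd0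
  refine mem_dPlusM_iff.mpr ⟨d' * e, D.mul_mem hd' he, ?_⟩
  have key : x - d' * e = d' * (a * x - e) - d' * x * (a - d) := by
    linear_combination (-x) * hdd'
  rw [key]
  exact M.sub_mem (M.mul_mem_left _ haxe) (M.mul_mem_left _ had)

theorem isUnit_of_isUnit_coe_dPlusM (hD : ∀ x ∈ D, x ≠ 0 → ∃ y ∈ D, x * y = 1) (hM : M ≠ ⊤)
    {u : dPlusM D M} (hu : IsUnit (u : T)) : IsUnit u := by
  obtain ⟨v, hv⟩ := hu.exists_right_inv
  have hvR : v ∈ dPlusM D M :=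
    mem_dPlusM_of_mul_mem hD u.2 (fun h => hM (M.eq_top_of_isUnit_mem h hu))
      (hv ▸ Subring.one_mem _)
  exact IsUnit.of_mul_eq_one (⟨v, hvR⟩ : dPlusM D M) (Subtype.ext hv)

theorem dvd_of_coe_dvd_dPlusM (hD : ∀ x ∈ D, x ≠ 0 → ∃ y ∈ D, x * y = 1) {a x : dPlusM D M}
    (haM : (a : T) ∉ M) (h : (a : T) ∣ x) : a ∣ x := by
  obtain ⟨t, ht⟩ := h
  exact ⟨⟨t, mem_dPlusM_of_mul_mem hD a.2 haM (ht ▸ x.2)⟩, Subtype.ext ht⟩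

theorem exists_isUnit_mul_sub_one_mem {K : Subring T} (hK : ∀ x ∈ K, x ≠ 0 → ∃ y ∈ K, x * y = 1)
    (hsum : ∀ t : T, ∃ k ∈ K, ∃ m ∈ M, t = k + m) {w : T} (hw : w ∉ M) :
    ∃ u, IsUnit u ∧ w * u - 1 ∈ M := by
  obtain ⟨k, hk, m, hm, rfl⟩ := hsum w
  have hk0 : k ≠ 0 := by
    rintro rfl
    exact hw (by simpa using hm)
  obtain ⟨y, -, hky⟩ := hK k hk hk0
  refine ⟨y, IsUnit.of_mul_eq_one_right k hky, ?_⟩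
  have key : (k + m) * y - 1 = m * y := by linear_combination hky
  exact key ▸ M.mul_mem_right y hm

theorem units_inv_mul_mem_dPlusM (hD : ∀ x ∈ D, x ≠ 0 → ∃ y ∈ D, x * y = 1) (hM : M.IsPrime)
    {u u' : Tˣ} {f d d' : T} (hf : f ∉ M) (hd : d ∈ D) (hd' : d' ∈ D)
    (hu : (u : T) - f * d ∈ M) (hu' : (u' : T) - f * d' ∈ M) :
    ((u⁻¹ * u' : Tˣ) : T) ∈ dPlusM D M := by
  set v := ((u⁻¹ * u' : Tˣ) : T)
  have huv : (u : T) * v = u' := by simp [v]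
  have hdM : d ∉ M := fun h =>
    hM.ne_top (M.eq_top_of_isUnit_mem (by simpa using M.add_mem hu (M.mul_mem_left f h)) u.isUnit)
  have hdv : d * v - d' ∈ M := by
    have key : f * (d * v - d') = (u' - f * d') - (u - f * d) * v := by linear_combination huv
    exact (hM.mem_or_mem (key ▸ M.sub_mem hu' (M.mul_mem_right v hu))).resolve_left hf
  exact mem_dPlusM_of_mul_mem hD (mem_dPlusM_iff.mpr ⟨d, hd, by simp⟩) hdM
    (mem_dPlusM_iff.mpr ⟨d', hd', hdv⟩)

theorem finite_associates_fiber_dPlusM (hD : ∀ x ∈ D, x ≠ 0 → ∃ y ∈ D, x * y = 1)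
    (hM : M.IsPrime) {K : Subring T} (hK : ∀ x ∈ K, x ≠ 0 → ∃ y ∈ K, x * y = 1)
    (hsum : ∀ t : T, ∃ k ∈ K, ∃ m ∈ M, t = k + m)
    (hquot : ∃ F : Set T, F.Finite ∧ (∀ c ∈ F, c ∈ K ∧ c ≠ 0) ∧
      ∀ k ∈ K, k ≠ 0 → ∃ c ∈ F, ∃ d ∈ D, k = c * d) (b : Associates T) :
    (Associates.mk '' {c : dPlusM D M | Associates.mk (c : T) = b}).Finite := by
  obtain ⟨F, hF, hFK, hFrep⟩ := hquot
  obtain ⟨a, rfl⟩ := Associates.mk_surjective b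
  have hFM : ∀ f ∈ F, f ∉ M := fun f hf hfM => by
    obtain ⟨y, -, hfy⟩ := hK f (hFK f hf).1 (hFK f hf).2
    exact hM.ne_top (M.eq_top_of_isUnit_mem hfM (IsUnit.of_mul_eq_one y hfy))
  have hFu : ∀ u : Tˣ, ∃ f ∈ F, ∃ d ∈ D, (u : T) - f * d ∈ M := fun u => by
    obtain ⟨k, hk, m, hm, hukm⟩ := hsum u
    have hk0 : k ≠ 0 := by
      rintro rfl
      exact hM.ne_top (M.eq_top_of_isUnit_mem (by simpa [hukm] using hm) u.isUnit)
    obtain ⟨f, hf, d, hd, rfl⟩ := hFrep k hk hk0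
    exact ⟨f, hf, d, hd, by simpa [hukm] using hm⟩
  have hcover : Associates.mk '' {c : dPlusM D M | Associates.mk (c : T) = Associates.mk a} ⊆
      ⋃ f ∈ F, Associates.mk ''
        {c : dPlusM D M | ∃ u : Tˣ, a * u = c ∧ ∃ d ∈ D, (u : T) - f * d ∈ M} := by
    rintro _ ⟨c, hc, rfl⟩
    obtain ⟨u, hu⟩ := (Associates.mk_eq_mk_iff_associated.mp hc).symm
    obtain ⟨f, hf, d, hd, hud⟩ := hFu u
    exact Set.mem_biUnion hf ⟨c, ⟨u, hu, d, hd, hud⟩, rfl⟩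
  refine (hF.biUnion fun f hf => Set.Subsingleton.finite ?_).subset hcover
  rintro _ ⟨c, ⟨u, hu, d, hd, hud⟩, rfl⟩ _ ⟨c', ⟨u', hu', d', hd', hud'⟩, rfl⟩
  have hv := units_inv_mul_mem_dPlusM hD hM (hFM f hf) hd hd' hud hud'
  have hvU : IsUnit (⟨_, hv⟩ : dPlusM D M) :=
    isUnit_of_isUnit_coe_dPlusM hD hM.ne_top (u⁻¹ * u').isUnit
  refine Associates.mk_eq_mk_iff_associated.mpr ⟨hvU.unit, Subtype.ext ?_⟩
  simp [← hu, ← hu', mul_assoc]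

end DPlusM

section MCD

variable {T : Type*} [CommRing T] [IsDomain T] {D : Subring T} {M : Ideal T}
  {S : Set (dPlusM D M)} {c : dPlusM D M}

theorem mul_dvd_of_coe_mul_dvd_dPlusM (hD : ∀ x ∈ D, x ≠ 0 → ∃ y ∈ D, x * y = 1)
    {w s : dPlusM D M} (hc0 : c ≠ 0) (hwM : (w : T) ∉ M) (hcs : c ∣ s) (h : (c : T) * w ∣ s) :
    c * w ∣ s := by
  obtain ⟨t, rfl⟩ := hcs
  obtain ⟨r, hr⟩ := h
  refine mul_dvd_mul_left c (dvd_of_coe_dvd_dPlusM hD hwM ⟨r, ?_⟩)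
  apply mul_left_cancel₀ (show (c : T) ≠ 0 by exact_mod_cast hc0)
  simpa [mul_assoc] using hr

theorem IsMCD.isUnit_of_mul_dvd_of_notMem (hD : ∀ x ∈ D, x ≠ 0 → ∃ y ∈ D, x * y = 1)
    (hM1 : ∀ w ∉ M, ∃ u, IsUnit u ∧ w * u - 1 ∈ M) (hc : IsMCD S c) (hc0 : c ≠ 0) {w : T}
    (hw : ∀ s ∈ S, (c : T) * w ∣ s) (hwM : w ∉ M) : IsUnit w := by
  obtain ⟨u, hu, hwu⟩ := hM1 w hwM
  let w' : dPlusM D M := ⟨w * u, mem_dPlusM_iff.mpr ⟨1, D.one_mem, hwu⟩⟩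
  have hw'M : (w' : T) ∉ M := (M.mul_unit_mem_iff_mem hu).not.mpr hwM
  have hw' : IsUnit w' := ((isMCD_iff_forall_isUnit hc0).mp hc).2 w' fun s hs =>
    mul_dvd_of_coe_mul_dvd_dPlusM hD hc0 hw'M (hc.1 s hs)
      (((associated_mul_unit_right w u hu).mul_left _).symm.dvd.trans (hw s hs))
  exact isUnit_of_mul_isUnit_left (hw'.map (dPlusM D M).subtype)

theorem IsMCD.not_forall_mul_mul_dvd (hM : M ≠ ⊤) (hc : IsMCD S c) (hc0 : c ≠ 0) {w₁ w₂ : T}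
    (h₁ : w₁ ∈ M) (h₂ : w₂ ∈ M) : ¬∀ s ∈ S, (c : T) * (w₁ * w₂) ∣ s := by
  intro h
  have hw₁ : IsUnit (⟨w₁, mem_dPlusM_of_mem_ideal D M h₁⟩ : dPlusM D M) :=
    ((isMCD_iff_forall_isUnit hc0).mp hc).2 _ fun s hs => by
      obtain ⟨r, hr⟩ := h s hs
      refine ⟨⟨w₂ * r, mem_dPlusM_of_mem_ideal D M (M.mul_mem_right r h₂)⟩, Subtype.ext ?_⟩
      simpa [mul_assoc] using hr
  exact hM (M.eq_top_of_isUnit_mem h₁ (hw₁.map (dPlusM D M).subtype))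

theorem IsMCD.mem_and_irreducible_of_mul_dvd (hD : ∀ x ∈ D, x ≠ 0 → ∃ y ∈ D, x * y = 1)
    (hM : M ≠ ⊤) (hM1 : ∀ w ∉ M, ∃ u, IsUnit u ∧ w * u - 1 ∈ M) (hc : IsMCD S c) (hc0 : c ≠ 0)
    {w : T} (hw : ∀ s ∈ S, (c : T) * w ∣ s) (hwU : ¬IsUnit w) : w ∈ M ∧ Irreducible w := by
  have hmem : ∀ v, (∀ s ∈ S, (c : T) * v ∣ s) → ¬IsUnit v → v ∈ M := fun v hv hvU =>
    by_contra fun hvM => hvU (hc.isUnit_of_mul_dvd_of_notMem hD hM1 hc0 hv hvM)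
  refine ⟨hmem w hw hwU, hwU, fun a b hab => ?_⟩
  subst hab
  by_contra! hab
  exact hc.not_forall_mul_mul_dvd hM hc0
    (hmem a (fun s hs => (mul_dvd_mul_left _ (dvd_mul_right a b)).trans (hw s hs)) hab.1)
    (hmem b (fun s hs => (mul_dvd_mul_left _ (dvd_mul_left b a)).trans (hw s hs)) hab.2) hw

theorem IsMCD.isMCD_coe_or_exists_irreducible (hD : ∀ x ∈ D, x ≠ 0 → ∃ y ∈ D, x * y = 1)
    (hM : M ≠ ⊤) (hM1 : ∀ w ∉ M, ∃ u, IsUnit u ∧ w * u - 1 ∈ M) (hc : IsMCD S c) (hc0 : c ≠ 0) :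
    IsMCD ((↑) '' S) (c : T) ∨ ∃ p ∈ M, Irreducible p ∧ (∀ s ∈ S, p ∣ (s : T)) ∧
      IsMCD ((↑) '' S) ((c : T) * p) := by
  have hc0' : (c : T) ≠ 0 := by exact_mod_cast hc0
  by_cases h : ∃ p, (∀ s ∈ S, (c : T) * p ∣ s) ∧ ¬IsUnit p
  · obtain ⟨p, hp, hpU⟩ := h
    obtain ⟨hpM, hpirr⟩ := hc.mem_and_irreducible_of_mul_dvd hD hM hM1 hc0 hp hpU
    refine Or.inr ⟨p, hpM, hpirr, fun s hs => (dvd_mul_left p c).trans (hp s hs),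
      (isMCD_iff_forall_isUnit (mul_ne_zero hc0' hpirr.ne_zero)).mpr
        ⟨Set.forall_mem_image.mpr hp, fun u hu => ?_⟩⟩
    have hpu : ∀ s ∈ S, (c : T) * (p * u) ∣ s := fun s hs =>
      mul_assoc (c : T) p u ▸ hu s ⟨s, hs, rfl⟩
    by_cases hpuU : IsUnit (p * u)
    · exact isUnit_of_mul_isUnit_right hpuU
    · exact ((hc.mem_and_irreducible_of_mul_dvd hD hM hM1 hc0 hpu hpuU).2.isUnit_or_isUnit
        rfl).resolve_left hpirr.not_isUnit
  · refine Or.inl ((isMCD_iff_forall_isUnit hc0').mpr ⟨Set.forall_mem_image.mpr fun s hs =>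
      map_dvd (dPlusM D M).subtype (hc.1 s hs), fun w hw => ?_⟩)
    exact by_contra fun hwU => h ⟨w, fun s hs => hw s ⟨s, hs, rfl⟩, hwU⟩

theorem finite_associates_coe_mcd_dPlusM (hD : ∀ x ∈ D, x ≠ 0 → ∃ y ∈ D, x * y = 1)
    (hM : M ≠ ⊤) (hM1 : ∀ w ∉ M, ∃ u, IsUnit u ∧ w * u - 1 ∈ M)
    (hfin : ∀ m ∈ M, (Associates.mk '' {p : T | p ∈ M ∧ Irreducible p ∧ p ∣ m}).Finite)
    (hS0 : ∀ s ∈ S, s ≠ 0) {s₁ : dPlusM D M} (hs₁ : s₁ ∈ S)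
    (hST : (Associates.mk '' {c : T | IsMCD ((↑) '' S) c}).Finite) :
    ((fun c : dPlusM D M => Associates.mk (c : T)) '' {c | IsMCD S c}).Finite := by
  set B := Associates.mk '' {p : T | p ∈ M ∧ Irreducible p ∧ p ∣ (s₁ : T)}
  have hB : B.Finite := by
    by_cases hs₁M : (s₁ : T) ∈ M
    · exact hfin _ hs₁M
    · refine Set.finite_empty.subset ?_
      rintro _ ⟨p, ⟨hpM, -, hp⟩, rfl⟩
      exact hs₁M (M.mem_of_dvd hp hpM)
  have hB0 : ∀ b ∈ B, b ≠ 0 := by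
    rintro _ ⟨p, ⟨-, hp, -⟩, rfl⟩
    exact Associates.mk_ne_zero.mpr hp.ne_zero
  refine (hST.union (hB.biUnion fun b hb =>
    hST.preimage (mul_left_injective₀ (hB0 b hb)).injOn)).subset ?_
  rintro _ ⟨c, hc, rfl⟩
  have hc0 : c ≠ 0 := by
    rintro rfl
    exact hS0 s₁ hs₁ (zero_dvd_iff.mp (hc.1 s₁ hs₁))
  rcases hc.isMCD_coe_or_exists_irreducible hD hM hM1 hc0 with h | ⟨p, hpM, hp, hpS, h⟩
  · exact Or.inl ⟨_, h, rfl⟩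
  · exact Or.inr (Set.mem_biUnion ⟨p, ⟨hpM, hp, hpS s₁ hs₁⟩, rfl⟩ ⟨_, h, Associates.mk_mul_mk.symm⟩)

end MCD

theorem dPlusM_mcdFinite_of_mcdFinite_of_quot_finite_general
    {T : Type*} [CommRing T] [IsDomain T]
    (K : Subring T) (hK : ∀ x ∈ K, x ≠ 0 → ∃ y ∈ K, x * y = 1)
    (M : Ideal T) (hMmax : M.IsMaximal)
    (hsum : ∀ t : T, ∃ k ∈ K, ∃ m ∈ M, t = k + m)
    (D : Subring T) (hD : ∀ x ∈ D, x ≠ 0 → ∃ y ∈ D, x * y = 1)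
    (hfin : ∀ m ∈ M, (Associates.mk '' {p : T | p ∈ M ∧ Irreducible p ∧ p ∣ m}).Finite)
    (hT : MCDFinite T)
    (hquot : ∃ F : Set T, F.Finite ∧ (∀ c ∈ F, c ∈ K ∧ c ≠ 0) ∧
      ∀ k ∈ K, k ≠ 0 → ∃ c ∈ F, ∃ d ∈ D, k = c * d) :
    MCDFinite (dPlusM D M) := by
  intro S hSfin hS0
  rcases S.eq_empty_or_nonempty with rfl | ⟨s₁, hs₁⟩
  · simp only [isMCD_empty_iff, Set.ofPred_eq_eq_singleton, Set.image_singleton,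
      Set.finite_singleton]
  have hST : (Associates.mk '' {c : T | IsMCD ((↑) '' S) c}).Finite :=
    hT _ (hSfin.image _) (Set.forall_mem_image.mpr fun s hs => by exact_mod_cast hS0 s hs)
  have himage := finite_associates_coe_mcd_dPlusM hD hMmax.ne_top
    (fun w hw => exists_isUnit_mul_sub_one_mem hK hsum hw) hfin hS0 hs₁ hST
  refine (himage.biUnion fun b _ =>
    finite_associates_fiber_dPlusM hD hMmax.isPrime hK hsum hquot b).subset ?_
  rintro _ ⟨c, hc, rfl⟩
  exact Set.mem_biUnion ⟨c, hc, rfl⟩ ⟨c, rfl, rfl⟩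

/-- D + M construction: `T = K + M` with `K` a subfield of `T`, `M` a nonzero maximal
ideal, every element of `T` uniquely a sum of an element of `K` and an element of `M`,
`D` a subfield of `K`, and `R = D + M`. Suppose every element of `M` has, up to
associates in `T`, only finitely many irreducible divisors lying in `M`. If `T` is
MCD-finite and the quotient group `K*/D*` is finite (there is a finite set of coset
representatives), then `R` is MCD-finite. -/
theorem dPlusM_mcdFinite_of_mcdFinite_of_quot_finite
    {T : Type*} [CommRing T] [IsDomain T]
    (K : Subring T) (hK : ∀ x ∈ K, x ≠ 0 → ∃ y ∈ K, x * y = 1)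
    (M : Ideal T) (hMmax : M.IsMaximal) (hMne : M ≠ ⊥)
    (hsum : ∀ t : T, ∃ k ∈ K, ∃ m ∈ M, t = k + m)
    (hKM : ∀ x : T, x ∈ K → x ∈ M → x = 0)
    (D : Subring T) (hDK : D ≤ K) (hD : ∀ x ∈ D, x ≠ 0 → ∃ y ∈ D, x * y = 1)
    (hfin : ∀ m ∈ M, (Associates.mk '' {p : T | p ∈ M ∧ Irreducible p ∧ p ∣ m}).Finite)
    (hT : MCDFinite T)
    (hquot : ∃ F : Set T, F.Finite ∧ (∀ c ∈ F, c ∈ K ∧ c ≠ 0) ∧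
      ∀ k ∈ K, k ≠ 0 → ∃ c ∈ F, ∃ d ∈ D, k = c * d) :
    MCDFinite (dPlusM D M) :=
  dPlusM_mcdFinite_of_mcdFinite_of_quot_finite_general K hK M hMmax hsum D hD hfin hT hquot
end

section
/- Let T be an integral domain of the form T = K + M, where K is a subfield of T, M is a nonzero maximal ideal of T, and every element of T is uniquely the sum of an element of K and an element of M. Let D be a subfield of K and let R be the subring D + M of T. Then for every m ∈ M, the element m is irreducible in R if and only if m is irreducible in T. -/
/-!
An element of `R = D + M` that is a unit of `T` is a unit of `R`: if `(d + m)(k + n) = 1` with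
`d ∈ D`, `k ∈ K`, then `dk - 1 ∈ K ∩ M = 0`, so `k = d⁻¹ ∈ D` and the inverse lies in `R`. Hence an
atom of `T` lying in `R` is an atom of `R`. Conversely, every `t = k + n ∈ T` becomes an element of
`R` after multiplication by a unit of `T` (namely `k⁻¹` if `k ≠ 0`). Since `M` is prime, one factor
of `m = a * b` lies in `M`, and moving that unit from `a` to `b` turns the factorization into
one inside `R`.
-/

section DPlusM

variable {T : Type*} [CommRing T] (K : Subring T) (M : Ideal T) (D : Subring T)

theorem mul_eq_one_of_add_mul_add_eq_one (hKM : ∀ x : T, x ∈ K → x ∈ M → x = 0)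
    {k₁ k₂ m₁ m₂ : T} (hk₁ : k₁ ∈ K) (hk₂ : k₂ ∈ K) (hm₁ : m₁ ∈ M) (hm₂ : m₂ ∈ M)
    (h : (k₁ + m₁) * (k₂ + m₂) = 1) : k₁ * k₂ = 1 := by
  have hK : k₁ * k₂ - 1 ∈ K := K.sub_mem (K.mul_mem hk₁ hk₂) K.one_mem
  have hM : k₁ * k₂ - 1 ∈ M := by
    rw [show k₁ * k₂ - 1 = -(k₁ * m₂ + m₁ * k₂ + m₁ * m₂) by linear_combination h]
    exact M.neg_mem (M.add_mem (M.add_mem (M.mul_mem_left k₁ hm₂) (M.mul_mem_right k₂ hm₁))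
      (M.mul_mem_left m₁ hm₂))
  exact sub_eq_zero.mp (hKM _ hK hM)

theorem isLocalHom_dPlusM_subtype [Nontrivial T]
    (hsum : ∀ t : T, ∃ k ∈ K, ∃ m ∈ M, t = k + m) (hKM : ∀ x : T, x ∈ K → x ∈ M → x = 0)
    (hDK : D ≤ K) (hD : ∀ x ∈ D, x ≠ 0 → ∃ y ∈ D, x * y = 1) :
    IsLocalHom (dPlusM D M).subtype := by
  refine ⟨?_⟩
  rintro ⟨_, d, hd, n, hn, rfl⟩ hx
  obtain ⟨b, hb⟩ := isUnit_iff_exists_inv.mp hx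
  obtain ⟨k, hk, n', hn', rfl⟩ := hsum b
  have hdk : d * k = 1 := mul_eq_one_of_add_mul_add_eq_one K M hKM (hDK hd) hk hn hn' hb
  obtain ⟨y, hy, hdy⟩ := hD d hd (left_ne_zero_of_mul_eq_one hdk)
  have hky : k = y := by rw [← one_mul k, ← hdy, mul_right_comm, hdk, one_mul]
  exact isUnit_iff_exists_inv.mpr ⟨⟨k + n', k, hky ▸ hy, n', hn', rfl⟩, Subtype.ext hb⟩

theorem exists_unit_mul_mem_dPlusM (hK : ∀ x ∈ K, x ≠ 0 → ∃ y ∈ K, x * y = 1)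
    (hsum : ∀ t : T, ∃ k ∈ K, ∃ m ∈ M, t = k + m) (t : T) :
    ∃ u : Tˣ, (u : T) * t ∈ dPlusM D M := by
  obtain ⟨k, hk, n, hn, rfl⟩ := hsum t
  rcases eq_or_ne k 0 with rfl | hk0
  · exact ⟨1, by simpa using mem_dPlusM_of_mem_ideal D M hn⟩
  obtain ⟨y, -, hky⟩ := hK k hk hk0
  refine ⟨Units.mkOfMulEqOne y k (by rwa [mul_comm]), ?_⟩
  rw [Units.val_mkOfMulEqOne, mul_add, mul_comm y k, hky]
  exact one_add_mem_dPlusM D M hn y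

theorem irreducible_of_irreducible_dPlusM (hK : ∀ x ∈ K, x ≠ 0 → ∃ y ∈ K, x * y = 1)
    (hsum : ∀ t : T, ∃ k ∈ K, ∃ m ∈ M, t = k + m) (hM : M.IsPrime) {m : T} (hm : m ∈ M)
    (h : Irreducible (⟨m, mem_dPlusM_of_mem_ideal D M hm⟩ : dPlusM D M)) : Irreducible m := by
  have factor_in_M : ∀ a b : T, m = a * b → a ∈ M → IsUnit a ∨ IsUnit b := by
    intro a b hab ha
    obtain ⟨u, hu⟩ := exists_unit_mul_mem_dPlusM K M D hK hsum b
    have hfac : (⟨m, mem_dPlusM_of_mem_ideal D M hm⟩ : dPlusM D M) =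
        ⟨a * ↑u⁻¹, mem_dPlusM_of_mem_ideal D M (M.mul_mem_right _ ha)⟩ * ⟨u * b, hu⟩ :=
      Subtype.ext (by simp [hab, mul_assoc])
    refine (h.isUnit_or_isUnit hfac).imp (fun h' => ?_) (fun h' => ?_)
    · exact (Units.isUnit_mul_units a u⁻¹).mp (h'.map (dPlusM D M).subtype)
    · exact (Units.isUnit_units_mul u b).mp (h'.map (dPlusM D M).subtype)
  refine ⟨fun hu => hM.ne_top (M.eq_top_of_isUnit_mem hm hu), fun a b hab => ?_⟩
  rcases hM.mem_or_mem (hab ▸ hm) with ha | hb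
  · exact factor_in_M a b hab ha
  · exact (factor_in_M b a (hab.trans (mul_comm a b)) hb).symm

end DPlusM

theorem dPlusM_irreducible_iff_of_mem_ideal_general
    {T : Type*} [CommRing T] [IsDomain T]
    (K : Subring T) (hK : ∀ x ∈ K, x ≠ 0 → ∃ y ∈ K, x * y = 1)
    (M : Ideal T) (hMmax : M.IsMaximal)
    (hsum : ∀ t : T, ∃ k ∈ K, ∃ m ∈ M, t = k + m)
    (hKM : ∀ x : T, x ∈ K → x ∈ M → x = 0)
    (D : Subring T) (hDK : D ≤ K) (hD : ∀ x ∈ D, x ≠ 0 → ∃ y ∈ D, x * y = 1)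
    (m : T) (hm : m ∈ M) :
    Irreducible (⟨m, mem_dPlusM_of_mem_ideal D M hm⟩ : dPlusM D M) ↔ Irreducible m := by
  have := isLocalHom_dPlusM_subtype K M D hsum hKM hDK hD
  exact ⟨irreducible_of_irreducible_dPlusM K M D hK hsum hMmax.isPrime hm,
    fun h => Irreducible.of_map (f := (dPlusM D M).subtype) h⟩

/-- D + M construction: `T = K + M` with `K` a subfield of `T`, `M` a nonzero maximal
ideal, every element of `T` uniquely a sum of an element of `K` and an element of `M`,
`D` a subfield of `K`, and `R = D + M`. Then an element `m ∈ M` is irreducible in `R`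
if and only if it is irreducible in `T`. -/
theorem dPlusM_irreducible_iff_of_mem_ideal
    {T : Type*} [CommRing T] [IsDomain T]
    (K : Subring T) (hK : ∀ x ∈ K, x ≠ 0 → ∃ y ∈ K, x * y = 1)
    (M : Ideal T) (hMmax : M.IsMaximal) (hMne : M ≠ ⊥)
    (hsum : ∀ t : T, ∃ k ∈ K, ∃ m ∈ M, t = k + m)
    (hKM : ∀ x : T, x ∈ K → x ∈ M → x = 0)
    (D : Subring T) (hDK : D ≤ K) (hD : ∀ x ∈ D, x ≠ 0 → ∃ y ∈ D, x * y = 1)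
    (m : T) (hm : m ∈ M) :
    Irreducible (⟨m, mem_dPlusM_of_mem_ideal D M hm⟩ : dPlusM D M) ↔ Irreducible m :=
  dPlusM_irreducible_iff_of_mem_ideal_general K hK M hMmax hsum hKM D hDK hD m hm
end

section
/- Let T be an integral domain of the form T = K + M, where K is a subfield of T, M is a nonzero maximal ideal of T, and every element of T is uniquely the sum of an element of K and an element of M. Let D be a subfield of K and let R be the subring D + M of T. Then for all nonzero c₁, c₂ ∈ K and every nonzero m ∈ M, the elements c₁m and c₂m are associates in R if and only if c₁ and c₂ lie in the same coset of D* in K* (i.e., c₁/c₂ ∈ D). -/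
section DPlusM

variable {T : Type*} [CommRing T] {K D : Subring T} {M : Ideal T}

theorem mem_dPlusM_of_mem {d : T} (hd : d ∈ D) : d ∈ dPlusM D M :=
  ⟨d, hd, 0, M.zero_mem, (add_zero d).symm⟩

theorem exists_mem_eq_mul_of_mul_eq (hKM : ∀ x : T, x ∈ K → x ∈ M → x = 0) (hDK : D ≤ K)
    {c c' u : T} (hc : c ∈ K) (hc' : c' ∈ K) (hu : u ∈ dPlusM D M) (h : c * u = c') :
    ∃ d ∈ D, c' = c * d := by
  obtain ⟨d, hd, n, hn, rfl⟩ := hu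
  have hK : c * d - c' ∈ K := K.sub_mem (K.mul_mem hc (hDK hd)) hc'
  have hM : c * d - c' ∈ M := by
    rw [show c * d - c' = -(c * n) by linear_combination h]
    exact M.neg_mem (M.mul_mem_left c hn)
  exact ⟨d, hd, by linear_combination -hKM _ hK hM⟩

theorem isUnit_subring_mk_of_mul_eq_one {S : Subring T} {x y : T} (hx : x ∈ S) (hy : y ∈ S)
    (h : x * y = 1) : IsUnit (⟨x, hx⟩ : S) :=
  IsUnit.of_mul_eq_one ⟨y, hy⟩ (Subtype.ext h)

end DPlusM

theorem dPlusM_associated_mul_iff_general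
    {T : Type*} [CommRing T] [IsDomain T]
    (K : Subring T) (M : Ideal T)
    (hKM : ∀ x : T, x ∈ K → x ∈ M → x = 0)
    (D : Subring T) (hDK : D ≤ K) (hD : ∀ x ∈ D, x ≠ 0 → ∃ y ∈ D, x * y = 1)
    (c₁ c₂ m : T) (hc₁ : c₁ ∈ K) (hc₂ : c₂ ∈ K) (hc₁0 : c₁ ≠ 0)
    (hm : m ∈ M) (hm0 : m ≠ 0) :
    Associated
      (⟨c₁ * m, mem_dPlusM_of_mem_ideal D M (M.mul_mem_left c₁ hm)⟩ : dPlusM D M)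
      (⟨c₂ * m, mem_dPlusM_of_mem_ideal D M (M.mul_mem_left c₂ hm)⟩ : dPlusM D M) ↔
    ∃ d ∈ D, c₁ = c₂ * d := by
  constructor
  · intro h
    obtain ⟨u, hu⟩ := h.symm
    have hcancel : c₂ * u * m = c₁ * m := by
      rw [mul_right_comm]
      exact congrArg Subtype.val hu
    exact exists_mem_eq_mul_of_mul_eq hKM hDK hc₂ hc₁ u.1.2 (mul_right_cancel₀ hm0 hcancel)
  · rintro ⟨d, hd, rfl⟩
    obtain ⟨e, he, hde⟩ := hD d hd (right_ne_zero_of_mul hc₁0)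
    have hunit := isUnit_subring_mk_of_mul_eq_one (mem_dPlusM_of_mem (M := M) hd)
      (mem_dPlusM_of_mem he) hde
    exact Associated.symm ⟨hunit.unit, Subtype.ext (mul_right_comm c₂ m d)⟩

/-- D + M construction: `T = K + M` with `K` a subfield of `T`, `M` a nonzero maximal
ideal, every element of `T` uniquely a sum of an element of `K` and an element of `M`,
`D` a subfield of `K`, and `R = D + M`. For nonzero `c₁, c₂ ∈ K` and nonzero `m ∈ M`,
the elements `c₁ * m` and `c₂ * m` are associates in `R` if and only if `c₁` and `c₂`
lie in the same coset of `D*` in `K*`, i.e. `c₁ = c₂ * d` for some `d ∈ D`. -/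
theorem dPlusM_associated_mul_iff
    {T : Type*} [CommRing T] [IsDomain T]
    (K : Subring T) (hK : ∀ x ∈ K, x ≠ 0 → ∃ y ∈ K, x * y = 1)
    (M : Ideal T) (hMmax : M.IsMaximal) (hMne : M ≠ ⊥)
    (hsum : ∀ t : T, ∃ k ∈ K, ∃ m ∈ M, t = k + m)
    (hKM : ∀ x : T, x ∈ K → x ∈ M → x = 0)
    (D : Subring T) (hDK : D ≤ K) (hD : ∀ x ∈ D, x ≠ 0 → ∃ y ∈ D, x * y = 1)
    (c₁ c₂ m : T) (hc₁ : c₁ ∈ K) (hc₂ : c₂ ∈ K) (hc₁0 : c₁ ≠ 0) (hc₂0 : c₂ ≠ 0)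
    (hm : m ∈ M) (hm0 : m ≠ 0) :
    Associated
      (⟨c₁ * m, mem_dPlusM_of_mem_ideal D M (M.mul_mem_left c₁ hm)⟩ : dPlusM D M)
      (⟨c₂ * m, mem_dPlusM_of_mem_ideal D M (M.mul_mem_left c₂ hm)⟩ : dPlusM D M) ↔
    ∃ d ∈ D, c₁ = c₂ * d :=
  dPlusM_associated_mul_iff_general K M hKM D hDK hD c₁ c₂ m hc₁ hc₂ hc₁0 hm hm0
end

section
/- Let T be an integral domain of the form T = K + M, where K is a subfield of T, M is a nonzero maximal ideal of T, and every element of T is uniquely the sum of an element of K and an element of M. Let D be a subfield of K and let R be the subring D + M of T. For x = k + m ∈ T (with k ∈ K, m ∈ M), define x̂ = m if k = 0 and x̂ = 1 + k⁻¹m if k ≠ 0. Then for all x, y ∈ T with x ∉ M, if x divides y in T, then x̂ divides ŷ in R. -/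
section

variable {T : Type*} [CommRing T] {K : Subring T} {M : Ideal T}

theorem eq_of_add_eq_add_of_inf_eq_zero (hKM : ∀ x : T, x ∈ K → x ∈ M → x = 0)
    {k k' m m' : T} (hk : k ∈ K) (hk' : k' ∈ K) (hm : m ∈ M) (hm' : m' ∈ M)
    (h : k + m = k' + m') : k = k' := by
  have hdiff : k - k' = m' - m := by linear_combination h
  exact sub_eq_zero.mp (hKM _ (K.sub_mem hk hk') (hdiff ▸ M.sub_mem hm' hm))

theorem mul_eq_of_add_mul_add_eq_add (hKM : ∀ x : T, x ∈ K → x ∈ M → x = 0)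
    {kx mx kc mc ky my : T} (hkx : kx ∈ K) (hmx : mx ∈ M) (hkc : kc ∈ K) (hmc : mc ∈ M)
    (hky : ky ∈ K) (hmy : my ∈ M) (h : (kx + mx) * (kc + mc) = ky + my) :
    kx * kc = ky := by
  refine eq_of_add_eq_add_of_inf_eq_zero hKM (K.mul_mem hkx hkc) hky
    (M.add_mem (M.mul_mem_left kx hmc) (M.mul_mem_right (kc + mc) hmx)) hmy ?_
  linear_combination h

end

theorem Subring.mk_dvd_mk_of_mul_eq {T : Type*} [CommRing T] (S : Subring T) {a b y : T}
    (ha : a ∈ S) (hb : b ∈ S) (hy : y ∈ S) (h : a * b = y) :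
    (⟨a, ha⟩ : S) ∣ ⟨y, hy⟩ :=
  ⟨⟨b, hb⟩, Subtype.ext h.symm⟩

theorem dPlusM_hat_dvd_hat_of_dvd_general
    {T : Type*} [CommRing T]
    (K : Subring T)
    (M : Ideal T)
    (hsum : ∀ t : T, ∃ k ∈ K, ∃ m ∈ M, t = k + m)
    (hKM : ∀ x : T, x ∈ K → x ∈ M → x = 0)
    (D : Subring T)
    (x y kx mx ky my kx' : T)
    (hkx : kx ∈ K) (hmx : mx ∈ M) (hxdec : x = kx + mx)
    (hky : ky ∈ K) (hmy : my ∈ M) (hydec : y = ky + my)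
    (hkx' : kx * kx' = 1) (hdvd : x ∣ y) :
    (ky = 0 →
      (⟨1 + kx' * mx, one_add_mem_dPlusM D M hmx kx'⟩ : dPlusM D M) ∣
        ⟨my, mem_dPlusM_of_mem_ideal D M hmy⟩) ∧
    (∀ ky' : T, ky * ky' = 1 →
      (⟨1 + kx' * mx, one_add_mem_dPlusM D M hmx kx'⟩ : dPlusM D M) ∣
        ⟨1 + ky' * my, one_add_mem_dPlusM D M hmy ky'⟩) := by
  obtain ⟨c, hc⟩ := hdvd
  obtain ⟨kc, hkc, mc, hmc, rfl⟩ := hsum c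
  have hk : kx * kc = ky :=
    mul_eq_of_add_mul_add_eq_add hKM hkx hmx hkc hmc hky hmy (hxdec ▸ hydec ▸ hc.symm)
  have hxhat : (1 + kx' * mx) * (kx * (kc + mc)) = ky + my := by
    linear_combination (mx * (kc + mc)) * hkx' - (kc + mc) * hxdec - hc + hydec
  constructor
  · intro hky0
    have hcof : kx * (kc + mc) = kx * mc := by linear_combination hk + hky0
    refine (dPlusM D M).mk_dvd_mk_of_mul_eq _
      (hcof ▸ mem_dPlusM_of_mem_ideal D M (M.mul_mem_left kx hmc)) _ ?_
    linear_combination hxhat + hky0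
  · intro ky' hky'
    have hcof : ky' * (kx * (kc + mc)) = 1 + ky' * kx * mc := by
      linear_combination ky' * hk + hky'
    refine (dPlusM D M).mk_dvd_mk_of_mul_eq _
      (hcof ▸ one_add_mem_dPlusM D M hmc (ky' * kx)) _ ?_
    linear_combination ky' * hxhat + hky'

/-- D + M construction: `T = K + M` with `K` a subfield of `T`, `M` a nonzero maximal
ideal, every element of `T` uniquely a sum of an element of `K` and an element of `M`,
`D` a subfield of `K`, and `R = D + M`. For `x = kx + mx ∉ M` (so `kx ≠ 0`, with
inverse `kx'`) and `y = ky + my`, write `x̂ = 1 + kx'*mx` and `ŷ = my` if `ky = 0`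
(resp. `ŷ = 1 + ky'*my` if `ky` has inverse `ky'`). If `x` divides `y` in `T`, then
`x̂` divides `ŷ` in `R`. -/
theorem dPlusM_hat_dvd_hat_of_dvd
    {T : Type*} [CommRing T] [IsDomain T]
    (K : Subring T) (hK : ∀ x ∈ K, x ≠ 0 → ∃ y ∈ K, x * y = 1)
    (M : Ideal T) (hMmax : M.IsMaximal) (hMne : M ≠ ⊥)
    (hsum : ∀ t : T, ∃ k ∈ K, ∃ m ∈ M, t = k + m)
    (hKM : ∀ x : T, x ∈ K → x ∈ M → x = 0)
    (D : Subring T) (hDK : D ≤ K) (hD : ∀ x ∈ D, x ≠ 0 → ∃ y ∈ D, x * y = 1)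
    (x y kx mx ky my kx' : T)
    (hkx : kx ∈ K) (hmx : mx ∈ M) (hxdec : x = kx + mx)
    (hky : ky ∈ K) (hmy : my ∈ M) (hydec : y = ky + my)
    (hxM : x ∉ M) (hkx' : kx * kx' = 1) (hdvd : x ∣ y) :
    (ky = 0 →
      (⟨1 + kx' * mx, one_add_mem_dPlusM D M hmx kx'⟩ : dPlusM D M) ∣
        ⟨my, mem_dPlusM_of_mem_ideal D M hmy⟩) ∧
    (∀ ky' : T, ky * ky' = 1 →
      (⟨1 + kx' * mx, one_add_mem_dPlusM D M hmx kx'⟩ : dPlusM D M) ∣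
        ⟨1 + ky' * my, one_add_mem_dPlusM D M hmy ky'⟩) :=
  dPlusM_hat_dvd_hat_of_dvd_general K M hsum hKM D x y kx mx ky my kx' hkx hmx hxdec hky hmy hydec
    hkx' hdvd
end

section
/- Let D be an integral domain in which the intersection of every infinite family of pairwise incomparable principal ideals is the zero ideal (property (*)). Then D is both an IDF domain and MCD-finite. -/
/-- Property `(*)` of the paper. -/
def StarProperty (D : Type*) [CommRing D] : Prop :=
  ∀ S : Set (Ideal D), (∀ I ∈ S, ∃ x : D, I = Ideal.span {x}) →
    (∀ I ∈ S, ∀ J ∈ S, I ≠ J → ¬ I ≤ J ∧ ¬ J ≤ I) → S.Infinite → sInf S = ⊥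

theorem eq_zero_of_isMCD_empty {M : Type*} [CommMonoidWithZero M] {c : M}
    (hc : IsMCD (∅ : Set M) c) : c = 0 :=
  (associated_zero_iff_eq_zero c).mp (hc.2 0 (by simp) (dvd_zero c))

namespace StarProperty

variable {D : Type*} [CommRing D] [IsDomain D]

theorem infinite_image_span_singleton {P : Set D} (hP : (Associates.mk '' P).Infinite) :
    ((fun p : D => Ideal.span {p}) '' P).Infinite := by
  have hcomp : (fun p : D => Ideal.span {p}) '' P =
      (fun A => (Ideal.associatesEquivIsPrincipal D A : Ideal D)) '' (Associates.mk '' P) := by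
    rw [Set.image_image]
    rfl
  rw [hcomp]
  exact hP.image (Subtype.val_injective.comp (Ideal.associatesEquivIsPrincipal D).injective).injOn

theorem finite_associates_of_antichain_of_dvd (hD : StarProperty D) {a : D} (ha : a ≠ 0)
    {P : Set D} (hdvd : ∀ p ∈ P, p ∣ a)
    (hanti : ∀ p ∈ P, ∀ q ∈ P, p ∣ q → Associated p q) :
    (Associates.mk '' P).Finite := by
  by_contra hinf
  set S := (fun p : D => Ideal.span {p}) '' P
  have hprincipal : ∀ I ∈ S, ∃ x : D, I = Ideal.span {x} := by
    rintro _ ⟨p, -, rfl⟩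
    exact ⟨p, rfl⟩
  have hincomparable : ∀ I ∈ S, ∀ J ∈ S, I ≠ J → ¬ I ≤ J ∧ ¬ J ≤ I := by
    rintro _ ⟨p, hp, rfl⟩ _ ⟨q, hq, rfl⟩ hne
    simp only [Ne, Ideal.span_singleton_eq_span_singleton,
      Ideal.span_singleton_le_span_singleton] at hne ⊢
    exact ⟨fun h => hne (hanti q hq p hp h).symm, fun h => hne (hanti p hp q hq h)⟩
  have ha_mem : a ∈ sInf S := by
    refine Submodule.mem_sInf.2 ?_
    rintro _ ⟨p, hp, rfl⟩
    exact Ideal.mem_span_singleton.2 (hdvd p hp)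
  rw [hD S hprincipal hincomparable (infinite_image_span_singleton hinf), Ideal.mem_bot] at ha_mem
  exact ha ha_mem

theorem isIDFDomain (hD : StarProperty D) : IsIDFDomain D := fun _ ha =>
  hD.finite_associates_of_antichain_of_dvd ha (fun _ hp => hp.2)
    fun _ hp _ hq hpq => hp.1.associated_of_dvd hq.1 hpq

theorem mcdFinite (hD : StarProperty D) : MCDFinite D := by
  intro T _ hT0
  rcases T.eq_empty_or_nonempty with rfl | ⟨t, ht⟩
  · refine (Set.finite_singleton (Associates.mk (0 : D))).subset ?_
    rintro _ ⟨c, hc, rfl⟩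
    rw [eq_zero_of_isMCD_empty hc]
    rfl
  · exact hD.finite_associates_of_antichain_of_dvd (hT0 t ht) (fun _ hc => hc.1 t ht)
      fun _ hc d hd hcd => hc.2 d hd.1 hcd

end StarProperty

/-- If in an integral domain `D` the intersection of every infinite family of pairwise
incomparable principal ideals is the zero ideal (property `(*)`), then `D` is both an
IDF domain and MCD-finite. -/
theorem isIDF_and_mcdFinite_of_star_property (D : Type*) [CommRing D] [IsDomain D]
    (hstar : ∀ S : Set (Ideal D), (∀ I ∈ S, ∃ x : D, I = Ideal.span {x}) →
      (∀ I ∈ S, ∀ J ∈ S, I ≠ J → ¬ I ≤ J ∧ ¬ J ≤ I) → S.Infinite → sInf S = ⊥) :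
    IsIDFDomain D ∧ MCDFinite D :=
  ⟨StarProperty.isIDFDomain hstar, StarProperty.mcdFinite hstar⟩
end
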